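/- arXiv:2411.10404 — 7 statements merged into one kernel-verified Lean document; each statement's English description precedes it below -/
import Mathlib

section
/- Let μ be a finitely supported probability measure on Mat₂(ℝ). Then T(μ) ≤ 8·δ(μ). -/
open Finset

lemma span_pair_finrank {M : Type*} [AddCommGroup M] [Module ℝ M] (x y : M) :
    Module.finrank ℝ (Submodule.span ℝ ({x, y} : Set M)) ≤ 2 := by
  classical
  have h := finrank_span_finset_le_card (R := ℝ) ({x, y} : Finset M)
  have hc : ({x, y} : Finset M).card ≤ 2 := (card_insert_le _ _).trans (by simp)
  have hcoe : (({x, y} : Finset M) : Set M) = ({x, y} : Set M) := by simp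
  rw [Set.finrank, hcoe] at h
  exact h.trans hc

lemma cent_mem {X Y : Matrix (Fin 2) (Fin 2) ℝ}
    (hX : ¬ ∃ c : ℝ, X = c • (1 : Matrix (Fin 2) (Fin 2) ℝ))
    (h : X * Y = Y * X) :
    Y ∈ Submodule.span ℝ ({1, X} : Set (Matrix (Fin 2) (Fin 2) ℝ)) := by
  have e : ∀ i j, X i 0 * Y 0 j + X i 1 * Y 1 j = Y i 0 * X 0 j + Y i 1 * X 1 j := by
    intro i j
    have := congrFun (congrFun h i) j
    simpa [Matrix.mul_apply, Fin.sum_univ_two] using this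
  set p := X 0 0; set q := X 0 1; set r := X 1 0; set s := X 1 1
  set a := Y 0 0; set b := Y 0 1; set c := Y 1 0; set d := Y 1 1
  have e00 := e 0 0; have e01 := e 0 1; have e10 := e 1 0; have e11 := e 1 1
  have key : ∃ α β : ℝ, Y = α • (1 : Matrix (Fin 2) (Fin 2) ℝ) + β • X := by
    by_cases hq : q ≠ 0
    · refine ⟨a - (b/q) * p, b/q, ?_⟩
      ext i j
      fin_cases i <;> fin_cases j <;>
        simp [Matrix.one_apply, -Fin.isValue] <;> field_simp <;> ring_nf <;>
        nlinarith [e00, e01, e10, e11, sq_nonneg q]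
    · push_neg at hq
      by_cases hr : r ≠ 0
      · refine ⟨a - (c/r) * p, c/r, ?_⟩
        ext i j
        fin_cases i <;> fin_cases j <;>
          simp [Matrix.one_apply, -Fin.isValue] <;> field_simp <;> ring_nf <;>
          nlinarith [e00, e01, e10, e11, sq_nonneg r]
      · push_neg at hr
        have hps : p ≠ s := by
          intro hps
          apply hX
          refine ⟨p, ?_⟩
          ext i j
          fin_cases i <;> fin_cases j <;>
            simp [Matrix.one_apply, hq, hr, hps, -Fin.isValue] <;>
            first | rfl | (try simp [hq, hr]) <;> aesop
        refine ⟨a - ((a-d)/(p-s)) * p, (a-d)/(p-s), ?_⟩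
        have hps2 : p - s ≠ 0 := sub_ne_zero.mpr hps
        ext i j
        fin_cases i <;> fin_cases j <;>
          simp [Matrix.one_apply, -Fin.isValue] <;> field_simp <;> ring_nf <;>
          nlinarith [e00, e01, e10, e11, hq, hr]
  obtain ⟨α, β, hY⟩ := key
  rw [hY]
  exact Submodule.add_mem _
    (Submodule.smul_mem _ _ (Submodule.subset_span (by simp)))
    (Submodule.smul_mem _ _ (Submodule.subset_span (by simp)))

/-- Let `μ` be a finitely supported probability measure on `Mat₂(ℝ)`.
Then `T(μ) ≤ 8·δ(μ)`, where `δ(μ)` is the maximum of `μ(S')` over subsets `S'` of the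
support whose linear span has dimension at most `2`.  (We phrase `T(μ) ≤ 8·δ(μ)` as the
existence of such a subset witnessing the bound; the maximum is attained since there
are only finitely many subsets of the support.) -/
theorem stmt0 (μ : Matrix (Fin 2) (Fin 2) ℝ →₀ ℝ)
    (hnonneg : ∀ X, 0 ≤ μ X) (hle : ∀ X, μ X ≤ 1)
    (hsum : ∑ X ∈ μ.support, μ X = 1) :
    ∃ S : Finset (Matrix (Fin 2) (Fin 2) ℝ), S ⊆ μ.support ∧
      Module.finrank ℝ (Submodule.span ℝ (S : Set (Matrix (Fin 2) (Fin 2) ℝ))) ≤ 2 ∧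
      (∑ X ∈ μ.support, ∑ Y ∈ μ.support, if X * Y = Y * X then μ X * μ Y else 0)
        ≤ 8 * ∑ X ∈ S, μ X := by
  classical
  set Supp := μ.support with hSupp
  set P : Matrix (Fin 2) (Fin 2) ℝ → Prop :=
    fun X => ∃ c : ℝ, X = c • (1 : Matrix (Fin 2) (Fin 2) ℝ) with hP
  set Sc := Supp.filter P with hSc
  set N := Supp.filter (fun X => ¬ P X) with hN
  set t : Matrix (Fin 2) (Fin 2) ℝ → Matrix (Fin 2) (Fin 2) ℝ → ℝ :=
    fun X Y => if X * Y = Y * X then μ X * μ Y else 0 with ht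
  have htnonneg : ∀ X Y, 0 ≤ t X Y := by
    intro X Y; rw [ht]; dsimp only
    split
    · exact mul_nonneg (hnonneg X) (hnonneg Y)
    · exact le_rfl
  have htle : ∀ X Y, t X Y ≤ μ X * μ Y := by
    intro X Y; rw [ht]; dsimp only
    split
    · exact le_rfl
    · exact mul_nonneg (hnonneg X) (hnonneg Y)
  -- the scalar mass
  set s := ∑ X ∈ Sc, μ X with hs
  have hs0 : 0 ≤ s := Finset.sum_nonneg (fun X _ => hnonneg X)
  have hNle1 : ∑ X ∈ N, μ X ≤ 1 := by
    rw [← hsum]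
    exact Finset.sum_le_sum_of_subset_of_nonneg (filter_subset _ _)
      (fun X _ _ => hnonneg X)
  -- bound on sums over scalars
  have h1 : ∑ X ∈ Sc, ∑ Y ∈ Supp, t X Y ≤ s := by
    rw [hs]
    refine Finset.sum_le_sum (fun X _ => ?_)
    calc ∑ Y ∈ Supp, t X Y ≤ ∑ Y ∈ Supp, μ X * μ Y :=
          Finset.sum_le_sum (fun Y _ => htle X Y)
      _ = μ X * ∑ Y ∈ Supp, μ Y := by rw [Finset.mul_sum]
      _ = μ X := by rw [hsum, mul_one]
  have h2 : ∑ X ∈ N, ∑ Y ∈ Sc, t X Y ≤ s := by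
    calc ∑ X ∈ N, ∑ Y ∈ Sc, t X Y ≤ ∑ X ∈ N, ∑ Y ∈ Sc, μ X * μ Y :=
          Finset.sum_le_sum (fun X _ => Finset.sum_le_sum (fun Y _ => htle X Y))
      _ = (∑ X ∈ N, μ X) * s := by rw [hs, ← Finset.sum_mul_sum]
      _ ≤ 1 * s := mul_le_mul_of_nonneg_right hNle1 hs0
      _ = s := one_mul s
  -- the case N empty
  rcases Finset.eq_empty_or_nonempty N with hNe | hNne
  · refine ⟨Sc, filter_subset _ _, ?_, ?_⟩
    · -- all scalars lie in span {1, 1}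
      have hsub : (Sc : Set (Matrix (Fin 2) (Fin 2) ℝ)) ⊆
          ↑(Submodule.span ℝ ({1, 1} : Set (Matrix (Fin 2) (Fin 2) ℝ))) := by
        intro X hX
        simp only [hSc, coe_filter, Set.mem_setOf_eq] at hX
        obtain ⟨-, c, rfl⟩ := hX
        exact Submodule.smul_mem _ _ (Submodule.subset_span (by simp))
      have := Submodule.finrank_mono (Submodule.span_le.mpr hsub)
      exact this.trans (span_pair_finrank _ _)
    · have hsplit : ∑ X ∈ Supp, ∑ Y ∈ Supp, t X Y
          = ∑ X ∈ Sc, ∑ Y ∈ Supp, t X Y + ∑ X ∈ N, ∑ Y ∈ Supp, t X Y := by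
        rw [hSc, hN, Finset.sum_filter_add_sum_filter_not]
      rw [show (∑ X ∈ Supp, ∑ Y ∈ Supp, if X * Y = Y * X then μ X * μ Y else 0)
          = ∑ X ∈ Supp, ∑ Y ∈ Supp, t X Y from rfl, hsplit, hNe]
      simp only [Finset.sum_empty, add_zero]
      nlinarith [h1, hs0]
  -- N nonempty: pick the class of maximal mass
  obtain ⟨X₀, hX₀N, hmax⟩ := N.exists_max_image
      (fun X => ∑ Y ∈ N.filter (fun Y => X * Y = Y * X), μ Y) hNne
  set g := fun X => ∑ Y ∈ N.filter (fun Y => X * Y = Y * X), μ Y with hg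
  have hg0 : 0 ≤ g X₀ := Finset.sum_nonneg (fun Y _ => hnonneg Y)
  have h3 : ∑ X ∈ N, ∑ Y ∈ N, t X Y ≤ g X₀ := by
    have inner : ∀ X, ∑ Y ∈ N, t X Y = μ X * g X := by
      intro X
      calc ∑ Y ∈ N, t X Y
          = ∑ Y ∈ N, if X * Y = Y * X then μ X * μ Y else 0 := rfl
        _ = ∑ Y ∈ N.filter (fun Y => X * Y = Y * X), μ X * μ Y :=
            (Finset.sum_filter _ _).symm
        _ = μ X * g X := by rw [hg]; dsimp only; rw [Finset.mul_sum]
    calc ∑ X ∈ N, ∑ Y ∈ N, t X Y = ∑ X ∈ N, μ X * g X := by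
          refine Finset.sum_congr rfl (fun X _ => inner X)
      _ ≤ ∑ X ∈ N, μ X * g X₀ := by
          refine Finset.sum_le_sum (fun X hX => ?_)
          exact mul_le_mul_of_nonneg_left (hmax X hX) (hnonneg X)
      _ = (∑ X ∈ N, μ X) * g X₀ := by rw [Finset.sum_mul]
      _ ≤ 1 * g X₀ := mul_le_mul_of_nonneg_right hNle1 hg0
      _ = g X₀ := one_mul _
  have hX₀ns : ¬ P X₀ := (Finset.mem_filter.mp hX₀N).2
  refine ⟨Sc ∪ N.filter (fun Y => X₀ * Y = Y * X₀), ?_, ?_, ?_⟩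
  · exact Finset.union_subset (filter_subset _ _)
      ((filter_subset _ _).trans (filter_subset _ _))
  · -- span is within span {1, X₀}
    have hsub : (((Sc ∪ N.filter (fun Y => X₀ * Y = Y * X₀)) :
        Finset (Matrix (Fin 2) (Fin 2) ℝ)) : Set (Matrix (Fin 2) (Fin 2) ℝ)) ⊆
        ↑(Submodule.span ℝ ({1, X₀} : Set (Matrix (Fin 2) (Fin 2) ℝ))) := by
      intro Y hY
      simp only [coe_union, Set.mem_union] at hY
      rcases hY with hY | hY
      · simp only [hSc, coe_filter, Set.mem_setOf_eq] at hY
        obtain ⟨-, c, rfl⟩ := hY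
        exact Submodule.smul_mem _ _ (Submodule.subset_span (by simp))
      · simp only [coe_filter, Set.mem_setOf_eq] at hY
        exact cent_mem hX₀ns hY.2
    have := Submodule.finrank_mono (Submodule.span_le.mpr hsub)
    exact this.trans (span_pair_finrank _ _)
  · -- the numerical bound
    have hdisj : Disjoint Sc (N.filter (fun Y => X₀ * Y = Y * X₀)) := by
      refine Finset.disjoint_left.mpr (fun Y hY hY' => ?_)
      have h1' := (Finset.mem_filter.mp hY).2
      have h2' := (Finset.mem_filter.mp ((Finset.mem_filter.mp hY').1)).2
      exact h2' h1'
    rw [Finset.sum_union hdisj]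
    have hsplit : ∑ X ∈ Supp, ∑ Y ∈ Supp, t X Y
        = ∑ X ∈ Sc, ∑ Y ∈ Supp, t X Y + ∑ X ∈ N, ∑ Y ∈ Supp, t X Y := by
      rw [hSc, hN, Finset.sum_filter_add_sum_filter_not]
    have hsplit2 : ∀ X, ∑ Y ∈ Supp, t X Y
        = ∑ Y ∈ Sc, t X Y + ∑ Y ∈ N, t X Y := by
      intro X
      rw [hSc, hN, Finset.sum_filter_add_sum_filter_not]
    have h4 : ∑ X ∈ N, ∑ Y ∈ Supp, t X Y ≤ s + g X₀ := by
      calc ∑ X ∈ N, ∑ Y ∈ Supp, t X Y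
          = ∑ X ∈ N, ∑ Y ∈ Sc, t X Y + ∑ X ∈ N, ∑ Y ∈ N, t X Y := by
            rw [← Finset.sum_add_distrib]
            exact Finset.sum_congr rfl (fun X _ => hsplit2 X)
        _ ≤ s + g X₀ := add_le_add h2 h3
    rw [show (∑ X ∈ Supp, ∑ Y ∈ Supp, if X * Y = Y * X then μ X * μ Y else 0)
        = ∑ X ∈ Supp, ∑ Y ∈ Supp, t X Y from rfl, hsplit]
    have : g X₀ = ∑ X ∈ N.filter (fun Y => X₀ * Y = Y * X₀), μ X := rfl
    nlinarith [h1, h4, hs0, hg0]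
end

section
/- There is an absolute constant C > 0 such that for every finitely supported probability measure ν on ℝ one has Σ ν(x1)ν(x2)ν(x3)ν(x4)ν(y1)ν(y2)ν(y3)ν(y4) ≤ C·(ν(0)^3 + ‖ν‖_2^6), where the sum runs over all 8-tuples (x1,x2,x3,x4,y1,y2,y3,y4) of real numbers satisfying x2·y3 = x3·y2, x2·(y4−y1) = y2·(x4−x1), x3·(y4−y1) = y3·(x4−x1), and x2·x3·y2·y3·(x4−x1)·(y4−y1) = 0. -/
open Finset

noncomputable def Ef (ν : ℝ →₀ ℝ) (c v : ℝ) : ℝ := if v = c then ν v else 0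
noncomputable def Nf (ν : ℝ →₀ ℝ) (c v : ℝ) : ℝ := if v = c then 0 else ν v

lemma Ef_nonneg (ν : ℝ →₀ ℝ) (hnn : ∀ x, 0 ≤ ν x) (c v : ℝ) : 0 ≤ Ef ν c v := by
  unfold Ef; split <;> [exact hnn v; exact le_rfl]

lemma Nf_nonneg (ν : ℝ →₀ ℝ) (hnn : ∀ x, 0 ≤ ν x) (c v : ℝ) : 0 ≤ Nf ν c v := by
  unfold Nf; split <;> [exact le_rfl; exact hnn v]

lemma Nf_ne (ν : ℝ →₀ ℝ) {c v : ℝ} (h : Nf ν c v ≠ 0) : v ≠ c := by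
  unfold Nf at h; intro hv; simp [hv] at h

lemma sum_Ef (ν : ℝ →₀ ℝ) (c : ℝ) : (∑ x ∈ ν.support, Ef ν c x) = ν c := by
  unfold Ef
  rw [Finset.sum_ite_eq' ν.support c (fun x => ν x)]
  split
  · rfl
  · exact (Finsupp.notMem_support_iff.1 (by assumption)).symm

lemma sum_Nf_le (ν : ℝ →₀ ℝ) (hnn : ∀ x, 0 ≤ ν x) (h1 : ∑ x ∈ ν.support, ν x = 1) (c : ℝ) :
    (∑ x ∈ ν.support, Nf ν c x) ≤ 1 := by
  calc (∑ x ∈ ν.support, Nf ν c x) ≤ ∑ x ∈ ν.support, ν x := by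
        refine Finset.sum_le_sum fun x _ => ?_
        unfold Nf; split <;> [exact hnn x; exact le_rfl]
    _ ≤ 1 := le_of_eq h1

lemma comp_sq (ν : ℝ →₀ ℝ) (c t : ℝ) (ht : t ≠ 0) :
    (∑ u ∈ ν.support, (ν (c + u * t)) ^ 2) ≤ ∑ x ∈ ν.support, (ν x) ^ 2 := by
  classical
  have hinj : Set.InjOn (fun u => c + u * t) ν.support := by
    intro a _ b _ h
    simp only at h
    have : a * t = b * t := by linarith
    exact mul_right_cancel₀ ht this
  rw [show (∑ u ∈ ν.support, (ν (c + u * t)) ^ 2)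
      = ∑ v ∈ ν.support.image (fun u => c + u * t), (ν v) ^ 2 from
    (Finset.sum_image (f := fun v => (ν v) ^ 2) (fun a ha b hb h => hinj ha hb h)).symm]
  rw [← Finset.sum_filter_of_ne (p := fun v => v ∈ ν.support)
    (fun v _ h => by
      have : ν v ≠ 0 := fun h0 => h (by rw [h0]; ring)
      exact Finsupp.mem_support_iff.2 this)]
  exact Finset.sum_le_sum_of_subset_of_nonneg
    (fun v hv => (Finset.mem_filter.1 hv).2)
    (fun v _ _ => sq_nonneg _)

lemma pair_le (ν : ℝ →₀ ℝ) (hnn : ∀ x, 0 ≤ ν x) (c t : ℝ) (ht : t ≠ 0) :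
    (∑ u ∈ ν.support, ν u * ν (c + u * t)) ≤ ∑ x ∈ ν.support, (ν x) ^ 2 := by
  have h1 : (∑ u ∈ ν.support, ν u * ν (c + u * t))
      ≤ ∑ u ∈ ν.support, ((ν u) ^ 2 + (ν (c + u * t)) ^ 2) / 2 := by
    refine Finset.sum_le_sum fun u _ => ?_
    nlinarith [sq_nonneg (ν u - ν (c + u * t))]
  have h2 := comp_sq ν c t ht
  have h3 : (∑ u ∈ ν.support, ((ν u) ^ 2 + (ν (c + u * t)) ^ 2) / 2)
      = ((∑ u ∈ ν.support, (ν u) ^ 2) + ∑ u ∈ ν.support, (ν (c + u * t)) ^ 2) / 2 := by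
    rw [← Finset.sum_div, Finset.sum_add_distrib]
  linarith

lemma level {A : Finset ℝ} {f g : ℝ → ℝ} {c d : ℝ} (hf : ∀ x ∈ A, 0 ≤ f x) (hd : 0 ≤ d)
    (hc : ∑ x ∈ A, f x ≤ c) (hg : ∀ x ∈ A, f x ≠ 0 → g x ≤ d) :
    ∑ x ∈ A, f x * g x ≤ c * d := by
  calc ∑ x ∈ A, f x * g x ≤ ∑ x ∈ A, f x * d := by
        refine Finset.sum_le_sum fun x hx => ?_
        by_cases h : f x = 0
        · simp [h]
        · exact mul_le_mul_of_nonneg_left (hg x hx h) (hf x hx)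
    _ = (∑ x ∈ A, f x) * d := (Finset.sum_mul ..).symm
    _ ≤ c * d := mul_le_mul_of_nonneg_right hc hd

lemma mono3 {a b : ℝ} (ha : 0 ≤ a) (hb : 0 ≤ b) (ha1 : a ≤ 1) (hb1 : b ≤ 1)
    {p q : ℕ} (h : 3 ≤ p + q) : a ^ p * b ^ q ≤ a ^ 3 + b ^ 3 := by
  set m := max a b with hm
  have hm0 : 0 ≤ m := le_trans ha (le_max_left _ _)
  have hm1 : m ≤ 1 := max_le ha1 hb1
  have h1 : a ^ p * b ^ q ≤ m ^ (p + q) := by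
    rw [pow_add]
    exact mul_le_mul (pow_le_pow_left₀ ha (le_max_left a b) p)
      (pow_le_pow_left₀ hb (le_max_right a b) q) (pow_nonneg hb q) (pow_nonneg hm0 p)
  have h2 : m ^ (p + q) ≤ m ^ 3 := pow_le_pow_of_le_one hm0 hm1 h
  have h3 : m ^ 3 ≤ a ^ 3 + b ^ 3 := by
    rcases max_cases a b with ⟨h4, _⟩ | ⟨h4, _⟩ <;> rw [hm, h4] <;>
      [nlinarith [pow_nonneg hb 3]; nlinarith [pow_nonneg ha 3]]
  linarith

lemma coverage {x1 x2 x3 x4 y1 y2 y3 y4 : ℝ}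
    (e1 : x2 * y3 = x3 * y2) (e2 : x2 * (y4 - y1) = y2 * (x4 - x1))
    (e3 : x3 * (y4 - y1) = y3 * (x4 - x1))
    (deg : x2 * x3 * y2 * y3 * (x4 - x1) * (y4 - y1) = 0) :
    (x2 = 0 ∧ x3 = 0 ∧ x4 = x1) ∨
    (x2 = 0 ∧ x3 = 0 ∧ y2 = 0 ∧ y3 = 0) ∨
    (y2 = 0 ∧ y3 = 0 ∧ y4 = y1) ∨
    (x2 = 0 ∧ y2 = 0 ∧ x4 = x1 ∧ y4 = y1) ∨
    (x3 = 0 ∧ y3 = 0 ∧ x4 = x1 ∧ y4 = y1) ∨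
    (x2 = 0 ∧ y2 = 0 ∧ x3 ≠ 0 ∧ x4 ≠ x1 ∧ y4 = y1 + y3 * ((x4 - x1) / x3)) ∨
    (x3 = 0 ∧ y3 = 0 ∧ x2 ≠ 0 ∧ x4 ≠ x1 ∧ y4 = y1 + y2 * ((x4 - x1) / x2)) ∨
    (x4 = x1 ∧ y4 = y1 ∧ x2 ≠ 0 ∧ x3 ≠ 0 ∧ y3 = 0 + y2 * (x3 / x2)) := by
  by_cases hx2 : x2 = 0
  · by_cases hx3 : x3 = 0
    · by_cases hx4 : x4 = x1
      · exact Or.inl ⟨hx2, hx3, hx4⟩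
      · -- from e2, e3 : y2 * (x4 - x1) = 0, y3 * (x4 - x1) = 0
        have hx4' : x4 - x1 ≠ 0 := sub_ne_zero.2 hx4
        have hy2 : y2 = 0 := by
          have : y2 * (x4 - x1) = 0 := by rw [← e2, hx2]; ring
          exact (mul_eq_zero.1 this).resolve_right hx4'
        have hy3 : y3 = 0 := by
          have : y3 * (x4 - x1) = 0 := by rw [← e3, hx3]; ring
          exact (mul_eq_zero.1 this).resolve_right hx4'
        exact Or.inr (Or.inl ⟨hx2, hx3, hy2, hy3⟩)
    · -- x2 = 0, x3 ≠ 0 ⇒ y2 = 0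
      have hy2 : y2 = 0 := by
        have : x3 * y2 = 0 := by rw [← e1, hx2]; ring
        exact (mul_eq_zero.1 this).resolve_left hx3
      by_cases hx4 : x4 = x1
      · have hy4 : y4 = y1 := by
          have : x3 * (y4 - y1) = 0 := by rw [e3, hx4]; ring
          have := (mul_eq_zero.1 this).resolve_left hx3
          linarith [sub_eq_zero.1 this]
        exact Or.inr (Or.inr (Or.inr (Or.inl ⟨hx2, hy2, hx4, hy4⟩)))
      · refine Or.inr (Or.inr (Or.inr (Or.inr (Or.inr (Or.inl ⟨hx2, hy2, hx3, hx4, ?_⟩)))))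
        field_simp
        linarith [e3]
  · by_cases hx3 : x3 = 0
    · -- x2 ≠ 0, x3 = 0 ⇒ y3 = 0
      have hy3 : y3 = 0 := by
        have : x2 * y3 = 0 := by rw [e1, hx3]; ring
        exact (mul_eq_zero.1 this).resolve_left hx2
      by_cases hx4 : x4 = x1
      · have hy4 : y4 = y1 := by
          have : x2 * (y4 - y1) = 0 := by rw [e2, hx4]; ring
          have := (mul_eq_zero.1 this).resolve_left hx2
          linarith [sub_eq_zero.1 this]
        exact Or.inr (Or.inr (Or.inr (Or.inr (Or.inl ⟨hx3, hy3, hx4, hy4⟩))))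
      · refine Or.inr (Or.inr (Or.inr (Or.inr (Or.inr (Or.inr (Or.inl ⟨hx3, hy3, hx2, hx4, ?_⟩))))))
        field_simp
        linarith [e2]
    · by_cases hy2 : y2 = 0
      · have hy3 : y3 = 0 := by
          have : x2 * y3 = 0 := by rw [e1, hy2]; ring
          exact (mul_eq_zero.1 this).resolve_left hx2
        have hy4 : y4 = y1 := by
          have : x2 * (y4 - y1) = 0 := by rw [e2, hy2]; ring
          have := (mul_eq_zero.1 this).resolve_left hx2
          linarith [sub_eq_zero.1 this]
        exact Or.inr (Or.inr (Or.inl ⟨hy2, hy3, hy4⟩))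
      · by_cases hy3 : y3 = 0
        · exfalso
          have : x3 * y2 = 0 := by rw [← e1, hy3]; ring
          rcases mul_eq_zero.1 this with h | h
          · exact hx3 h
          · exact hy2 h
        · -- all four nonzero; deg forces x4 = x1 or y4 = y1
          have hd : (x4 - x1) * (y4 - y1) = 0 := by
            have h := deg
            rcases mul_eq_zero.1 h with h' | h'
            · rcases mul_eq_zero.1 h' with h'' | h''
              · rcases mul_eq_zero.1 h'' with h3 | h3
                · rcases mul_eq_zero.1 h3 with h4 | h4
                  · rcases mul_eq_zero.1 h4 with h5 | h5
                    · exact absurd h5 hx2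
                    · exact absurd h5 hx3
                  · exact absurd h4 hy2
                · exact absurd h3 hy3
              · rw [h'']; ring
            · rw [h']; ring
          have hx4 : x4 = x1 := by
            rcases mul_eq_zero.1 hd with h | h
            · linarith [sub_eq_zero.1 h]
            · -- y4 = y1, then e3 : 0 = y3 * (x4 - x1)
              have hy4 : y4 - y1 = 0 := h
              have : y3 * (x4 - x1) = 0 := by rw [← e3, hy4]; ring
              have := (mul_eq_zero.1 this).resolve_left hy3
              linarith [sub_eq_zero.1 this]
          have hy4 : y4 = y1 := by
            have : x2 * (y4 - y1) = 0 := by rw [e2, hx4]; ring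
            have := (mul_eq_zero.1 this).resolve_left hx2
            linarith [sub_eq_zero.1 this]
          refine Or.inr (Or.inr (Or.inr (Or.inr (Or.inr (Or.inr (Or.inr ⟨hx4, hy4, hx2, hx3, ?_⟩))))))
          field_simp
          linarith [e1]

lemma master (ν : ℝ →₀ ℝ) (hnn : ∀ x, 0 ≤ ν x) (x1 x2 x3 x4 y1 y2 y3 y4 : ℝ) :
    (if x2 * y3 = x3 * y2 ∧ x2 * (y4 - y1) = y2 * (x4 - x1) ∧
          x3 * (y4 - y1) = y3 * (x4 - x1) ∧
          x2 * x3 * y2 * y3 * (x4 - x1) * (y4 - y1) = 0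
      then ν x1 * ν x2 * ν x3 * ν x4 * ν y1 * ν y2 * ν y3 * ν y4 else 0)
    ≤ ν x1 * (Ef ν 0 x2 * (Ef ν 0 x3 * (Ef ν x1 x4 * (ν y1 * (ν y2 * (ν y3 * ν y4))))))
    + ν x1 * (Ef ν 0 x2 * (Ef ν 0 x3 * (ν x4 * (ν y1 * (Ef ν 0 y2 * (Ef ν 0 y3 * ν y4))))))
    + ν x1 * (ν x2 * (ν x3 * (ν x4 * (ν y1 * (Ef ν 0 y2 * (Ef ν 0 y3 * Ef ν y1 y4))))))
    + ν x1 * (Ef ν 0 x2 * (ν x3 * (Ef ν x1 x4 * (ν y1 * (Ef ν 0 y2 * (ν y3 * Ef ν y1 y4))))))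
    + ν x1 * (ν x2 * (Ef ν 0 x3 * (Ef ν x1 x4 * (ν y1 * (ν y2 * (Ef ν 0 y3 * Ef ν y1 y4))))))
    + ν x1 * (Ef ν 0 x2 * (Nf ν 0 x3 * (Nf ν x1 x4 * (ν y1 * (Ef ν 0 y2 * (ν y3 * Ef ν (y1 + y3 * ((x4 - x1) / x3)) y4))))))
    + ν x1 * (Nf ν 0 x2 * (Ef ν 0 x3 * (Nf ν x1 x4 * (ν y1 * (ν y2 * (Ef ν 0 y3 * Ef ν (y1 + y2 * ((x4 - x1) / x2)) y4))))))
    + ν x1 * (Nf ν 0 x2 * (Nf ν 0 x3 * (Ef ν x1 x4 * (ν y1 * (ν y2 * (Ef ν (0 + y2 * (x3 / x2)) y3 * Ef ν y1 y4)))))) := by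
  have hE : ∀ c v : ℝ, 0 ≤ Ef ν c v := Ef_nonneg ν hnn
  have hN : ∀ c v : ℝ, 0 ≤ Nf ν c v := Nf_nonneg ν hnn
  have b1 : (0:ℝ) ≤ ν x1 * (Ef ν 0 x2 * (Ef ν 0 x3 * (Ef ν x1 x4 * (ν y1 * (ν y2 * (ν y3 * ν y4)))))) := by
    repeat' apply mul_nonneg
    all_goals first | apply hnn | apply hE | apply hN
  have b2 : (0:ℝ) ≤ ν x1 * (Ef ν 0 x2 * (Ef ν 0 x3 * (ν x4 * (ν y1 * (Ef ν 0 y2 * (Ef ν 0 y3 * ν y4)))))) := by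
    repeat' apply mul_nonneg
    all_goals first | apply hnn | apply hE | apply hN
  have b3 : (0:ℝ) ≤ ν x1 * (ν x2 * (ν x3 * (ν x4 * (ν y1 * (Ef ν 0 y2 * (Ef ν 0 y3 * Ef ν y1 y4)))))) := by
    repeat' apply mul_nonneg
    all_goals first | apply hnn | apply hE | apply hN
  have b4 : (0:ℝ) ≤ ν x1 * (Ef ν 0 x2 * (ν x3 * (Ef ν x1 x4 * (ν y1 * (Ef ν 0 y2 * (ν y3 * Ef ν y1 y4)))))) := by
    repeat' apply mul_nonneg
    all_goals first | apply hnn | apply hE | apply hN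
  have b5 : (0:ℝ) ≤ ν x1 * (ν x2 * (Ef ν 0 x3 * (Ef ν x1 x4 * (ν y1 * (ν y2 * (Ef ν 0 y3 * Ef ν y1 y4)))))) := by
    repeat' apply mul_nonneg
    all_goals first | apply hnn | apply hE | apply hN
  have b6 : (0:ℝ) ≤ ν x1 * (Ef ν 0 x2 * (Nf ν 0 x3 * (Nf ν x1 x4 * (ν y1 * (Ef ν 0 y2 * (ν y3 * Ef ν (y1 + y3 * ((x4 - x1) / x3)) y4)))))) := by
    repeat' apply mul_nonneg
    all_goals first | apply hnn | apply hE | apply hN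
  have b7 : (0:ℝ) ≤ ν x1 * (Nf ν 0 x2 * (Ef ν 0 x3 * (Nf ν x1 x4 * (ν y1 * (ν y2 * (Ef ν 0 y3 * Ef ν (y1 + y2 * ((x4 - x1) / x2)) y4)))))) := by
    repeat' apply mul_nonneg
    all_goals first | apply hnn | apply hE | apply hN
  have b8 : (0:ℝ) ≤ ν x1 * (Nf ν 0 x2 * (Nf ν 0 x3 * (Ef ν x1 x4 * (ν y1 * (ν y2 * (Ef ν (0 + y2 * (x3 / x2)) y3 * Ef ν y1 y4)))))) := by
    repeat' apply mul_nonneg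
    all_goals first | apply hnn | apply hE | apply hN
  split_ifs with h
  · obtain ⟨e1, e2, e3, deg⟩ := h
    rcases coverage e1 e2 e3 deg with h | h | h | h | h | h | h | h
    · obtain ⟨h2, h3, h4⟩ := h
      have : ν x1 * (Ef ν 0 x2 * (Ef ν 0 x3 * (Ef ν x1 x4 * (ν y1 * (ν y2 * (ν y3 * ν y4))))))
          = ν x1 * ν x2 * ν x3 * ν x4 * ν y1 * ν y2 * ν y3 * ν y4 := by
        simp [Ef, h2, h3, h4]; ring
      linarith
    · obtain ⟨h2, h3, h4, h5⟩ := h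
      have : ν x1 * (Ef ν 0 x2 * (Ef ν 0 x3 * (ν x4 * (ν y1 * (Ef ν 0 y2 * (Ef ν 0 y3 * ν y4))))))
          = ν x1 * ν x2 * ν x3 * ν x4 * ν y1 * ν y2 * ν y3 * ν y4 := by
        simp [Ef, h2, h3, h4, h5]; ring
      linarith
    · obtain ⟨h2, h3, h4⟩ := h
      have : ν x1 * (ν x2 * (ν x3 * (ν x4 * (ν y1 * (Ef ν 0 y2 * (Ef ν 0 y3 * Ef ν y1 y4))))))
          = ν x1 * ν x2 * ν x3 * ν x4 * ν y1 * ν y2 * ν y3 * ν y4 := by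
        simp [Ef, h2, h3, h4]; ring
      linarith
    · obtain ⟨h2, h3, h4, h5⟩ := h
      have : ν x1 * (Ef ν 0 x2 * (ν x3 * (Ef ν x1 x4 * (ν y1 * (Ef ν 0 y2 * (ν y3 * Ef ν y1 y4))))))
          = ν x1 * ν x2 * ν x3 * ν x4 * ν y1 * ν y2 * ν y3 * ν y4 := by
        simp [Ef, h2, h3, h4, h5]; ring
      linarith
    · obtain ⟨h2, h3, h4, h5⟩ := h
      have : ν x1 * (ν x2 * (Ef ν 0 x3 * (Ef ν x1 x4 * (ν y1 * (ν y2 * (Ef ν 0 y3 * Ef ν y1 y4))))))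
          = ν x1 * ν x2 * ν x3 * ν x4 * ν y1 * ν y2 * ν y3 * ν y4 := by
        simp [Ef, h2, h3, h4, h5]; ring
      linarith
    · obtain ⟨h2, h3, h4, h5, h6⟩ := h
      have : ν x1 * (Ef ν 0 x2 * (Nf ν 0 x3 * (Nf ν x1 x4 * (ν y1 * (Ef ν 0 y2 * (ν y3 * Ef ν (y1 + y3 * ((x4 - x1) / x3)) y4))))))
          = ν x1 * ν x2 * ν x3 * ν x4 * ν y1 * ν y2 * ν y3 * ν y4 := by
        simp [Ef, Nf, h2, h3, h4, h5, h6]; ring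
      linarith
    · obtain ⟨h2, h3, h4, h5, h6⟩ := h
      have : ν x1 * (Nf ν 0 x2 * (Ef ν 0 x3 * (Nf ν x1 x4 * (ν y1 * (ν y2 * (Ef ν 0 y3 * Ef ν (y1 + y2 * ((x4 - x1) / x2)) y4))))))
          = ν x1 * ν x2 * ν x3 * ν x4 * ν y1 * ν y2 * ν y3 * ν y4 := by
        simp [Ef, Nf, h2, h3, h4, h5, h6]; ring
      linarith
    · obtain ⟨h2, h3, h4, h5, h6⟩ := h
      have : ν x1 * (Nf ν 0 x2 * (Nf ν 0 x3 * (Ef ν x1 x4 * (ν y1 * (ν y2 * (Ef ν (0 + y2 * (x3 / x2)) y3 * Ef ν y1 y4))))))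
          = ν x1 * ν x2 * ν x3 * ν x4 * ν y1 * ν y2 * ν y3 * ν y4 := by
        simp [Ef, Nf, h2, h3, h4, h5, h6]; ring
      linarith
  · linarith

lemma pair_le_mid (ν : ℝ →₀ ℝ) (hnn : ∀ x, 0 ≤ ν x) (c t K : ℝ) (ht : t ≠ 0) (hK : 0 ≤ K) :
    (∑ u ∈ ν.support, ν u * (K * ν (c + u * t))) ≤ K * ∑ x ∈ ν.support, (ν x) ^ 2 := by
  have h : (∑ u ∈ ν.support, ν u * (K * ν (c + u * t)))
      = K * ∑ u ∈ ν.support, ν u * ν (c + u * t) := by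
    rw [Finset.mul_sum]; exact Finset.sum_congr rfl fun u _ => by ring
  rw [h]
  exact mul_le_mul_of_nonneg_left (pair_le ν hnn c t ht) hK

lemma pair_le_mul (ν : ℝ →₀ ℝ) (hnn : ∀ x, 0 ≤ ν x) (c t K : ℝ) (ht : t ≠ 0) (hK : 0 ≤ K) :
    (∑ u ∈ ν.support, ν u * (ν (c + u * t) * K)) ≤ (∑ x ∈ ν.support, (ν x) ^ 2) * K := by
  have h : (∑ u ∈ ν.support, ν u * (ν (c + u * t) * K))
      = (∑ u ∈ ν.support, ν u * ν (c + u * t)) * K := by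
    rw [Finset.sum_mul]; exact Finset.sum_congr rfl fun u _ => by ring
  rw [h]
  exact mul_le_mul_of_nonneg_right (pair_le ν hnn c t ht) hK

lemma levelS (ν : ℝ →₀ ℝ) (hnn : ∀ x, 0 ≤ ν x) {g : ℝ → ℝ} {c : ℝ}
    (hg : ∀ x ∈ ν.support, g x ≤ c * ν x) :
    ∑ x ∈ ν.support, ν x * g x ≤ c * ∑ x ∈ ν.support, (ν x) ^ 2 := by
  calc ∑ x ∈ ν.support, ν x * g x ≤ ∑ x ∈ ν.support, ν x * (c * ν x) := by
        refine Finset.sum_le_sum fun x hx => ?_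
        exact mul_le_mul_of_nonneg_left (hg x hx) (hnn x)
    _ = c * ∑ x ∈ ν.support, (ν x) ^ 2 := by
        rw [Finset.mul_sum]; exact Finset.sum_congr rfl fun x _ => by ring

lemma ev1 (ν : ℝ →₀ ℝ) (hnn : ∀ x, 0 ≤ ν x) (h1 : ∑ x ∈ ν.support, ν x = 1) :
    (∑ x1 ∈ ν.support, ∑ x2 ∈ ν.support, ∑ x3 ∈ ν.support, ∑ x4 ∈ ν.support,
     ∑ y1 ∈ ν.support, ∑ y2 ∈ ν.support, ∑ y3 ∈ ν.support, ∑ y4 ∈ ν.support,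
      ν x1 * (Ef ν 0 x2 * (Ef ν 0 x3 * (Ef ν x1 x4 * (ν y1 * (ν y2 * (ν y3 * ν y4)))))))
    ≤ ν 0 ^ 2 * ∑ x ∈ ν.support, (ν x) ^ 2 := by
  simp only [← Finset.mul_sum, ← Finset.sum_mul, h1, sum_Ef, mul_one, one_mul]
  calc ∑ x ∈ ν.support, ν x * (ν 0 * (ν 0 * ν x))
      = ν 0 ^ 2 * ∑ x ∈ ν.support, (ν x) ^ 2 := by
        rw [Finset.mul_sum]; exact Finset.sum_congr rfl fun x _ => by ring
    _ ≤ _ := le_rfl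

lemma ev2 (ν : ℝ →₀ ℝ) (hnn : ∀ x, 0 ≤ ν x) (h1 : ∑ x ∈ ν.support, ν x = 1) :
    (∑ x1 ∈ ν.support, ∑ x2 ∈ ν.support, ∑ x3 ∈ ν.support, ∑ x4 ∈ ν.support,
     ∑ y1 ∈ ν.support, ∑ y2 ∈ ν.support, ∑ y3 ∈ ν.support, ∑ y4 ∈ ν.support,
      ν x1 * (Ef ν 0 x2 * (Ef ν 0 x3 * (ν x4 * (ν y1 * (Ef ν 0 y2 * (Ef ν 0 y3 * ν y4)))))))
    ≤ ν 0 ^ 4 := by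
  simp only [← Finset.mul_sum, ← Finset.sum_mul, h1, sum_Ef, mul_one, one_mul]
  exact le_of_eq (by ring)

lemma ev3 (ν : ℝ →₀ ℝ) (hnn : ∀ x, 0 ≤ ν x) (h1 : ∑ x ∈ ν.support, ν x = 1) :
    (∑ x1 ∈ ν.support, ∑ x2 ∈ ν.support, ∑ x3 ∈ ν.support, ∑ x4 ∈ ν.support,
     ∑ y1 ∈ ν.support, ∑ y2 ∈ ν.support, ∑ y3 ∈ ν.support, ∑ y4 ∈ ν.support,
      ν x1 * (ν x2 * (ν x3 * (ν x4 * (ν y1 * (Ef ν 0 y2 * (Ef ν 0 y3 * Ef ν y1 y4)))))))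
    ≤ ν 0 ^ 2 * ∑ x ∈ ν.support, (ν x) ^ 2 := by
  simp only [← Finset.mul_sum, ← Finset.sum_mul, h1, sum_Ef, mul_one, one_mul]
  calc ∑ x ∈ ν.support, ν x * (ν 0 * (ν 0 * ν x))
      = ν 0 ^ 2 * ∑ x ∈ ν.support, (ν x) ^ 2 := by
        rw [Finset.mul_sum]; exact Finset.sum_congr rfl fun x _ => by ring
    _ ≤ _ := le_rfl

lemma ev4 (ν : ℝ →₀ ℝ) (hnn : ∀ x, 0 ≤ ν x) (h1 : ∑ x ∈ ν.support, ν x = 1) :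
    (∑ x1 ∈ ν.support, ∑ x2 ∈ ν.support, ∑ x3 ∈ ν.support, ∑ x4 ∈ ν.support,
     ∑ y1 ∈ ν.support, ∑ y2 ∈ ν.support, ∑ y3 ∈ ν.support, ∑ y4 ∈ ν.support,
      ν x1 * (Ef ν 0 x2 * (ν x3 * (Ef ν x1 x4 * (ν y1 * (Ef ν 0 y2 * (ν y3 * Ef ν y1 y4)))))))
    ≤ ν 0 ^ 2 * (∑ x ∈ ν.support, (ν x) ^ 2) ^ 2 := by
  simp only [← Finset.mul_sum, ← Finset.sum_mul, h1, sum_Ef, mul_one, one_mul]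
  have hI : (∑ i ∈ ν.support, ν i * (ν 0 * ν i)) = ν 0 * ∑ x ∈ ν.support, (ν x) ^ 2 := by
    rw [Finset.mul_sum]; exact Finset.sum_congr rfl fun x _ => by ring
  simp only [hI]
  calc ∑ x ∈ ν.support, ν x * (ν 0 * (ν x * (ν 0 * ∑ x ∈ ν.support, (ν x) ^ 2)))
      = ∑ x ∈ ν.support, (ν 0 ^ 2 * ∑ y ∈ ν.support, (ν y) ^ 2) * (ν x) ^ 2 :=
        Finset.sum_congr rfl fun x _ => by ring
    _ = (ν 0 ^ 2 * ∑ y ∈ ν.support, (ν y) ^ 2) * ∑ x ∈ ν.support, (ν x) ^ 2 := by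
        rw [← Finset.mul_sum]
    _ = ν 0 ^ 2 * (∑ x ∈ ν.support, (ν x) ^ 2) ^ 2 := by ring
    _ ≤ _ := le_rfl

lemma ev5 (ν : ℝ →₀ ℝ) (hnn : ∀ x, 0 ≤ ν x) (h1 : ∑ x ∈ ν.support, ν x = 1) :
    (∑ x1 ∈ ν.support, ∑ x2 ∈ ν.support, ∑ x3 ∈ ν.support, ∑ x4 ∈ ν.support,
     ∑ y1 ∈ ν.support, ∑ y2 ∈ ν.support, ∑ y3 ∈ ν.support, ∑ y4 ∈ ν.support,
      ν x1 * (ν x2 * (Ef ν 0 x3 * (Ef ν x1 x4 * (ν y1 * (ν y2 * (Ef ν 0 y3 * Ef ν y1 y4)))))))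
    ≤ ν 0 ^ 2 * (∑ x ∈ ν.support, (ν x) ^ 2) ^ 2 := by
  simp only [← Finset.mul_sum, ← Finset.sum_mul, h1, sum_Ef, mul_one, one_mul]
  have hI : (∑ i ∈ ν.support, ν i * (ν 0 * ν i)) = ν 0 * ∑ x ∈ ν.support, (ν x) ^ 2 := by
    rw [Finset.mul_sum]; exact Finset.sum_congr rfl fun x _ => by ring
  simp only [hI]
  calc ∑ x ∈ ν.support, ν x * (ν 0 * (ν x * (ν 0 * ∑ x ∈ ν.support, (ν x) ^ 2)))
      = ∑ x ∈ ν.support, (ν 0 ^ 2 * ∑ y ∈ ν.support, (ν y) ^ 2) * (ν x) ^ 2 :=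
        Finset.sum_congr rfl fun x _ => by ring
    _ = (ν 0 ^ 2 * ∑ y ∈ ν.support, (ν y) ^ 2) * ∑ x ∈ ν.support, (ν x) ^ 2 := by
        rw [← Finset.mul_sum]
    _ = ν 0 ^ 2 * (∑ x ∈ ν.support, (ν x) ^ 2) ^ 2 := by ring
    _ ≤ _ := le_rfl

lemma ev6 (ν : ℝ →₀ ℝ) (hnn : ∀ x, 0 ≤ ν x) (h1 : ∑ x ∈ ν.support, ν x = 1) :
    (∑ x1 ∈ ν.support, ∑ x2 ∈ ν.support, ∑ x3 ∈ ν.support, ∑ x4 ∈ ν.support,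
     ∑ y1 ∈ ν.support, ∑ y2 ∈ ν.support, ∑ y3 ∈ ν.support, ∑ y4 ∈ ν.support,
      ν x1 * (Ef ν 0 x2 * (Nf ν 0 x3 * (Nf ν x1 x4 * (ν y1 * (Ef ν 0 y2 * (ν y3 * Ef ν (y1 + y3 * ((x4 - x1) / x3)) y4)))))))
    ≤ ν 0 ^ 2 * ∑ x ∈ ν.support, (ν x) ^ 2 := by
  simp only [← Finset.mul_sum, ← Finset.sum_mul, h1, sum_Ef, mul_one, one_mul]
  have hS0 : (0:ℝ) ≤ ∑ x ∈ ν.support, (ν x) ^ 2 := Finset.sum_nonneg fun x _ => sq_nonneg _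
  have hν0 : (0:ℝ) ≤ ν 0 := hnn 0
  have hd : (0:ℝ) ≤ ν 0 * ∑ x ∈ ν.support, (ν x) ^ 2 := mul_nonneg hν0 hS0
  refine le_trans (level (fun x _ => hnn x) (mul_nonneg hν0 hd) (le_of_eq h1) ?_)
    (le_of_eq (by ring))
  intro x _ _
  refine mul_le_mul_of_nonneg_left ?_ hν0
  refine le_trans (level (fun i _ => Nf_nonneg ν hnn 0 i) hd (sum_Nf_le ν hnn h1 0) ?_)
    (le_of_eq (one_mul _))
  intro i _ hNi
  have hi : i ≠ 0 := Nf_ne ν hNi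
  refine le_trans (level (fun j _ => Nf_nonneg ν hnn x j) hd (sum_Nf_le ν hnn h1 x) ?_)
    (le_of_eq (one_mul _))
  intro i1 _ hNi1
  have hi1 : i1 ≠ x := Nf_ne ν hNi1
  refine le_trans (level (fun u _ => hnn u) hd (le_of_eq h1) ?_) (le_of_eq (one_mul _))
  intro i2 _ _
  exact mul_le_mul_of_nonneg_left
    (pair_le ν hnn i2 ((i1 - x) / i) (div_ne_zero (sub_ne_zero.2 hi1) hi)) hν0

lemma ev7 (ν : ℝ →₀ ℝ) (hnn : ∀ x, 0 ≤ ν x) (h1 : ∑ x ∈ ν.support, ν x = 1) :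
    (∑ x1 ∈ ν.support, ∑ x2 ∈ ν.support, ∑ x3 ∈ ν.support, ∑ x4 ∈ ν.support,
     ∑ y1 ∈ ν.support, ∑ y2 ∈ ν.support, ∑ y3 ∈ ν.support, ∑ y4 ∈ ν.support,
      ν x1 * (Nf ν 0 x2 * (Ef ν 0 x3 * (Nf ν x1 x4 * (ν y1 * (ν y2 * (Ef ν 0 y3 * Ef ν (y1 + y2 * ((x4 - x1) / x2)) y4)))))))
    ≤ ν 0 ^ 2 * ∑ x ∈ ν.support, (ν x) ^ 2 := by
  simp only [← Finset.mul_sum, ← Finset.sum_mul, h1, sum_Ef, mul_one, one_mul]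
  have hS0 : (0:ℝ) ≤ ∑ x ∈ ν.support, (ν x) ^ 2 := Finset.sum_nonneg fun x _ => sq_nonneg _
  have hν0 : (0:ℝ) ≤ ν 0 := hnn 0
  have hd : (0:ℝ) ≤ ν 0 * ∑ x ∈ ν.support, (ν x) ^ 2 := mul_nonneg hν0 hS0
  refine le_trans (level (fun x _ => hnn x) (mul_nonneg hν0 hd) (le_of_eq h1) ?_)
    (le_of_eq (by ring))
  intro x _ _
  refine le_trans (level (fun i _ => Nf_nonneg ν hnn 0 i) (mul_nonneg hν0 hd)
    (sum_Nf_le ν hnn h1 0) ?_) (le_of_eq (one_mul _))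
  intro i _ hNi
  have hi : i ≠ 0 := Nf_ne ν hNi
  refine mul_le_mul_of_nonneg_left ?_ hν0
  refine le_trans (level (fun j _ => Nf_nonneg ν hnn x j) hd (sum_Nf_le ν hnn h1 x) ?_)
    (le_of_eq (one_mul _))
  intro i1 _ hNi1
  have hi1 : i1 ≠ x := Nf_ne ν hNi1
  refine le_trans (level (fun u _ => hnn u) hd (le_of_eq h1) ?_) (le_of_eq (one_mul _))
  intro i2 _ _
  exact pair_le_mid ν hnn i2 ((i1 - x) / i) (ν 0)
    (div_ne_zero (sub_ne_zero.2 hi1) hi) hν0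

lemma ev8 (ν : ℝ →₀ ℝ) (hnn : ∀ x, 0 ≤ ν x) (h1 : ∑ x ∈ ν.support, ν x = 1) :
    (∑ x1 ∈ ν.support, ∑ x2 ∈ ν.support, ∑ x3 ∈ ν.support, ∑ x4 ∈ ν.support,
     ∑ y1 ∈ ν.support, ∑ y2 ∈ ν.support, ∑ y3 ∈ ν.support, ∑ y4 ∈ ν.support,
      ν x1 * (Nf ν 0 x2 * (Nf ν 0 x3 * (Ef ν x1 x4 * (ν y1 * (ν y2 * (Ef ν (0 + y2 * (x3 / x2)) y3 * Ef ν y1 y4)))))))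
    ≤ (∑ x ∈ ν.support, (ν x) ^ 2) ^ 3 := by
  simp only [← Finset.mul_sum, ← Finset.sum_mul, h1, sum_Ef, mul_one, one_mul]
  have hS0 : (0:ℝ) ≤ ∑ x ∈ ν.support, (ν x) ^ 2 := Finset.sum_nonneg fun x _ => sq_nonneg _
  have hSS : (0:ℝ) ≤ (∑ x ∈ ν.support, (ν x) ^ 2) * ∑ x ∈ ν.support, (ν x) ^ 2 :=
    mul_nonneg hS0 hS0
  refine le_trans (levelS ν hnn (c := (∑ x ∈ ν.support, (ν x) ^ 2) * ∑ x ∈ ν.support, (ν x) ^ 2)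
    ?_) (le_of_eq (by ring))
  intro x hx
  have hdx : (0:ℝ) ≤ ν x * ((∑ x ∈ ν.support, (ν x) ^ 2) * ∑ x ∈ ν.support, (ν x) ^ 2) :=
    mul_nonneg (hnn x) hSS
  refine le_trans ?_ (le_of_eq (mul_comm _ _))
  refine le_trans (level (fun i _ => Nf_nonneg ν hnn 0 i) hdx (sum_Nf_le ν hnn h1 0) ?_)
    (le_of_eq (one_mul _))
  intro i _ hNi
  have hi : i ≠ 0 := Nf_ne ν hNi
  refine le_trans (level (fun j _ => Nf_nonneg ν hnn 0 j) hdx (sum_Nf_le ν hnn h1 0) ?_)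
    (le_of_eq (one_mul _))
  intro i1 _ hNi1
  have hi1 : i1 ≠ 0 := Nf_ne ν hNi1
  refine mul_le_mul_of_nonneg_left ?_ (hnn x)
  refine levelS ν hnn (c := ∑ x ∈ ν.support, (ν x) ^ 2) ?_
  intro i2 _
  exact pair_le_mul ν hnn 0 (i1 / i) (ν i2) (div_ne_zero hi1 hi) (hnn i2)


set_option maxHeartbeats 2000000 in
/-- There is an absolute constant `C > 0` such that for every finitely
supported probability measure `ν` on `ℝ`, the weighted count of 8-tuples satisfying the
commutation equations together with the degeneracy condition
`x2·x3·y2·y3·(x4−x1)·(y4−y1) = 0` is at most `C·(ν(0)³ + ‖ν‖₂⁶)`. -/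
theorem stmt9 : ∃ C : ℝ, 0 < C ∧ ∀ ν : ℝ →₀ ℝ,
    (∀ x, 0 ≤ ν x) → (∀ x, ν x ≤ 1) → (∑ x ∈ ν.support, ν x = 1) →
    (∑ x1 ∈ ν.support, ∑ x2 ∈ ν.support, ∑ x3 ∈ ν.support, ∑ x4 ∈ ν.support,
     ∑ y1 ∈ ν.support, ∑ y2 ∈ ν.support, ∑ y3 ∈ ν.support, ∑ y4 ∈ ν.support,
      if x2 * y3 = x3 * y2 ∧ x2 * (y4 - y1) = y2 * (x4 - x1) ∧
          x3 * (y4 - y1) = y3 * (x4 - x1) ∧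
          x2 * x3 * y2 * y3 * (x4 - x1) * (y4 - y1) = 0
      then ν x1 * ν x2 * ν x3 * ν x4 * ν y1 * ν y2 * ν y3 * ν y4 else 0)
    ≤ C * (ν 0 ^ 3 + Real.sqrt (∑ x ∈ ν.support, (ν x) ^ 2) ^ 6) := by
  refine ⟨8, by norm_num, fun ν hnn hle1 h1 => ?_⟩
  have hS0 : (0:ℝ) ≤ ∑ x ∈ ν.support, (ν x) ^ 2 := Finset.sum_nonneg fun x _ => sq_nonneg _
  have hS1 : (∑ x ∈ ν.support, (ν x) ^ 2) ≤ 1 := by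
    calc (∑ x ∈ ν.support, (ν x) ^ 2) ≤ ∑ x ∈ ν.support, ν x :=
          Finset.sum_le_sum fun x _ => by nlinarith [hnn x, hle1 x]
      _ ≤ 1 := le_of_eq h1
  have hν0 : (0:ℝ) ≤ ν 0 := hnn 0
  have hν01 : ν 0 ≤ 1 := hle1 0
  have hsq : Real.sqrt (∑ x ∈ ν.support, (ν x) ^ 2) ^ 6 = (∑ x ∈ ν.support, (ν x) ^ 2) ^ 3 := by
    rw [show (6:ℕ) = 2 * 3 from rfl, pow_mul, Real.sq_sqrt hS0]
  rw [hsq]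
  calc (∑ x1 ∈ ν.support, ∑ x2 ∈ ν.support, ∑ x3 ∈ ν.support, ∑ x4 ∈ ν.support,
     ∑ y1 ∈ ν.support, ∑ y2 ∈ ν.support, ∑ y3 ∈ ν.support, ∑ y4 ∈ ν.support,
      if x2 * y3 = x3 * y2 ∧ x2 * (y4 - y1) = y2 * (x4 - x1) ∧
          x3 * (y4 - y1) = y3 * (x4 - x1) ∧
          x2 * x3 * y2 * y3 * (x4 - x1) * (y4 - y1) = 0
      then ν x1 * ν x2 * ν x3 * ν x4 * ν y1 * ν y2 * ν y3 * ν y4 else 0)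
      ≤ ∑ x1 ∈ ν.support, ∑ x2 ∈ ν.support, ∑ x3 ∈ ν.support, ∑ x4 ∈ ν.support,
     ∑ y1 ∈ ν.support, ∑ y2 ∈ ν.support, ∑ y3 ∈ ν.support, ∑ y4 ∈ ν.support,
      (ν x1 * (Ef ν 0 x2 * (Ef ν 0 x3 * (Ef ν x1 x4 * (ν y1 * (ν y2 * (ν y3 * ν y4))))))
    + ν x1 * (Ef ν 0 x2 * (Ef ν 0 x3 * (ν x4 * (ν y1 * (Ef ν 0 y2 * (Ef ν 0 y3 * ν y4))))))
    + ν x1 * (ν x2 * (ν x3 * (ν x4 * (ν y1 * (Ef ν 0 y2 * (Ef ν 0 y3 * Ef ν y1 y4))))))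
    + ν x1 * (Ef ν 0 x2 * (ν x3 * (Ef ν x1 x4 * (ν y1 * (Ef ν 0 y2 * (ν y3 * Ef ν y1 y4))))))
    + ν x1 * (ν x2 * (Ef ν 0 x3 * (Ef ν x1 x4 * (ν y1 * (ν y2 * (Ef ν 0 y3 * Ef ν y1 y4))))))
    + ν x1 * (Ef ν 0 x2 * (Nf ν 0 x3 * (Nf ν x1 x4 * (ν y1 * (Ef ν 0 y2 * (ν y3 * Ef ν (y1 + y3 * ((x4 - x1) / x3)) y4))))))
    + ν x1 * (Nf ν 0 x2 * (Ef ν 0 x3 * (Nf ν x1 x4 * (ν y1 * (ν y2 * (Ef ν 0 y3 * Ef ν (y1 + y2 * ((x4 - x1) / x2)) y4))))))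
    + ν x1 * (Nf ν 0 x2 * (Nf ν 0 x3 * (Ef ν x1 x4 * (ν y1 * (ν y2 * (Ef ν (0 + y2 * (x3 / x2)) y3 * Ef ν y1 y4))))))) := by
        refine Finset.sum_le_sum fun x1 _ => Finset.sum_le_sum fun x2 _ =>
          Finset.sum_le_sum fun x3 _ => Finset.sum_le_sum fun x4 _ =>
          Finset.sum_le_sum fun y1 _ => Finset.sum_le_sum fun y2 _ =>
          Finset.sum_le_sum fun y3 _ => Finset.sum_le_sum fun y4 _ =>
          master ν hnn x1 x2 x3 x4 y1 y2 y3 y4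
    _ ≤ 8 * (ν 0 ^ 3 + (∑ x ∈ ν.support, (ν x) ^ 2) ^ 3) := by
        simp (config := { maxSteps := 10000000 }) only [Finset.sum_add_distrib]
        have e1 := ev1 ν hnn h1
        have e2 := ev2 ν hnn h1
        have e3 := ev3 ν hnn h1
        have e4 := ev4 ν hnn h1
        have e5 := ev5 ν hnn h1
        have e6 := ev6 ν hnn h1
        have e7 := ev7 ν hnn h1
        have e8 := ev8 ν hnn h1
        have m1 : ν 0 ^ 2 * (∑ x ∈ ν.support, (ν x) ^ 2) ≤ ν 0 ^ 3 + (∑ x ∈ ν.support, (ν x) ^ 2) ^ 3 := by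
          have := mono3 hν0 hS0 hν01 hS1 (p := 2) (q := 1) (by norm_num)
          rwa [pow_one] at this
        have m2 : ν 0 ^ 4 ≤ ν 0 ^ 3 + (∑ x ∈ ν.support, (ν x) ^ 2) ^ 3 := by
          have h4 : ν 0 ^ 4 ≤ ν 0 ^ 3 := pow_le_pow_of_le_one hν0 hν01 (by norm_num)
          nlinarith [pow_nonneg hS0 3]
        have m3 : ν 0 ^ 2 * (∑ x ∈ ν.support, (ν x) ^ 2) ^ 2 ≤ ν 0 ^ 3 + (∑ x ∈ ν.support, (ν x) ^ 2) ^ 3 :=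
          mono3 hν0 hS0 hν01 hS1 (p := 2) (q := 2) (by norm_num)
        have m4 : (∑ x ∈ ν.support, (ν x) ^ 2) ^ 3 ≤ ν 0 ^ 3 + (∑ x ∈ ν.support, (ν x) ^ 2) ^ 3 := by
          nlinarith [pow_nonneg hν0 3]
        linarith
end

section
/- Let G be a group and let ν : G → [0,1] be a finitely supported function. Then for all finite nonempty subsets A1, A2, A3, A4 ⊆ G one has Σ_{a1∈A1, a2∈A2, a3∈A3, a4∈A4} ν(a1)ν(a2)ν(a3)ν(a4)·1[a1·a2^{-1} = a3·a4^{-1}] ≤ Π_{i=1}^{4} E_ν(A_i)^{1/4}. -/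
open Finset

/-- The weighted multiplicative energy `E_ν(A)` of a finite subset `A` of a group `G`
with respect to a weight `ν : G → ℝ`. -/
noncomputable def Enu {G : Type*} [Group G] [DecidableEq G] (ν : G → ℝ) (A : Finset G) : ℝ :=
  ∑ a1 ∈ A, ∑ a2 ∈ A, ∑ a3 ∈ A, ∑ a4 ∈ A,
    if a1 * a2⁻¹ = a3 * a4⁻¹ then ν a1 * ν a2 * ν a3 * ν a4 else 0

namespace Stmt11Aux

lemma swap14 {G : Type*} (A : Finset G) (f : G → G → G → G → ℝ) :
    (∑ a ∈ A, ∑ b ∈ A, ∑ c ∈ A, ∑ d ∈ A, f a b c d)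
      = ∑ a ∈ A, ∑ b ∈ A, ∑ c ∈ A, ∑ d ∈ A, f d b c a := by
  calc (∑ a ∈ A, ∑ b ∈ A, ∑ c ∈ A, ∑ d ∈ A, f a b c d)
      = ∑ a ∈ A, ∑ b ∈ A, ∑ d ∈ A, ∑ c ∈ A, f a b c d :=
        Finset.sum_congr rfl fun _ _ => Finset.sum_congr rfl fun _ _ => Finset.sum_comm
    _ = ∑ a ∈ A, ∑ d ∈ A, ∑ b ∈ A, ∑ c ∈ A, f a b c d :=
        Finset.sum_congr rfl fun _ _ => Finset.sum_comm
    _ = ∑ d ∈ A, ∑ a ∈ A, ∑ b ∈ A, ∑ c ∈ A, f a b c d := Finset.sum_comm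
    _ = ∑ d ∈ A, ∑ b ∈ A, ∑ a ∈ A, ∑ c ∈ A, f a b c d :=
        Finset.sum_congr rfl fun _ _ => Finset.sum_comm
    _ = ∑ d ∈ A, ∑ b ∈ A, ∑ c ∈ A, ∑ a ∈ A, f a b c d :=
        Finset.sum_congr rfl fun _ _ => Finset.sum_congr rfl fun _ _ => Finset.sum_comm

variable {G : Type*} [Group G] [DecidableEq G]

/-- Weighted representation function for the pairing `p`. -/
noncomputable def Rw (ν : G → ℝ) (p : G → G → G) (A B : Finset G) (x : G) : ℝ :=
  ∑ a ∈ A, ∑ b ∈ B, if p a b = x then ν a * ν b else 0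

lemma pair_eq (ν : G → ℝ) (p : G → G → G) (A B C D S : Finset G)
    (hAB : ∀ a ∈ A, ∀ b ∈ B, p a b ∈ S) :
    (∑ a ∈ A, ∑ b ∈ B, ∑ c ∈ C, ∑ d ∈ D,
        if p a b = p c d then (ν a * ν b) * (ν c * ν d) else 0)
      = ∑ x ∈ S, Rw ν p A B x * Rw ν p C D x := by
  have key : ∀ a ∈ A, ∀ b ∈ B, ∀ c : G, ∀ d : G,
      (if p a b = p c d then (ν a * ν b) * (ν c * ν d) else 0)
        = ∑ x ∈ S, (if p a b = x then ν a * ν b else 0) *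
            (if p c d = x then ν c * ν d else 0) := by
    intro a ha b hb c d
    simp only [ite_mul, zero_mul]
    rw [Finset.sum_ite_eq S (p a b)
      (fun x => ν a * ν b * if p c d = x then ν c * ν d else 0)]
    simp only [hAB a ha b hb, if_true]
    rcases eq_or_ne (p a b) (p c d) with h | h
    · simp [h, mul_assoc]
    · simp [h, h.symm]
  calc (∑ a ∈ A, ∑ b ∈ B, ∑ c ∈ C, ∑ d ∈ D,
        if p a b = p c d then (ν a * ν b) * (ν c * ν d) else 0)
      = ∑ a ∈ A, ∑ b ∈ B, ∑ c ∈ C, ∑ d ∈ D, ∑ x ∈ S,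
          (if p a b = x then ν a * ν b else 0) * (if p c d = x then ν c * ν d else 0) := by
        refine Finset.sum_congr rfl fun a ha => Finset.sum_congr rfl fun b hb =>
          Finset.sum_congr rfl fun c _ => Finset.sum_congr rfl fun d _ => key a ha b hb c d
    _ = ∑ a ∈ A, ∑ b ∈ B, ∑ c ∈ C, ∑ x ∈ S, ∑ d ∈ D,
          (if p a b = x then ν a * ν b else 0) * (if p c d = x then ν c * ν d else 0) :=
        Finset.sum_congr rfl fun _ _ => Finset.sum_congr rfl fun _ _ =>
          Finset.sum_congr rfl fun _ _ => Finset.sum_comm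
    _ = ∑ a ∈ A, ∑ b ∈ B, ∑ x ∈ S, ∑ c ∈ C, ∑ d ∈ D,
          (if p a b = x then ν a * ν b else 0) * (if p c d = x then ν c * ν d else 0) :=
        Finset.sum_congr rfl fun _ _ => Finset.sum_congr rfl fun _ _ => Finset.sum_comm
    _ = ∑ a ∈ A, ∑ x ∈ S, ∑ b ∈ B, ∑ c ∈ C, ∑ d ∈ D,
          (if p a b = x then ν a * ν b else 0) * (if p c d = x then ν c * ν d else 0) :=
        Finset.sum_congr rfl fun _ _ => Finset.sum_comm
    _ = ∑ x ∈ S, ∑ a ∈ A, ∑ b ∈ B, ∑ c ∈ C, ∑ d ∈ D,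
          (if p a b = x then ν a * ν b else 0) * (if p c d = x then ν c * ν d else 0) :=
        Finset.sum_comm
    _ = ∑ x ∈ S, Rw ν p A B x * Rw ν p C D x := by
        refine Finset.sum_congr rfl fun x _ => ?_
        unfold Rw
        rw [Finset.sum_mul]
        refine (Finset.sum_congr rfl fun a _ => ?_).symm
        rw [Finset.sum_mul]
        refine Finset.sum_congr rfl fun b _ => ?_
        rw [Finset.mul_sum]
        refine Finset.sum_congr rfl fun c _ => ?_
        rw [Finset.mul_sum]

lemma Enu_nonneg (ν : G → ℝ) (h0 : ∀ g, 0 ≤ ν g) (A : Finset G) : 0 ≤ Enu ν A := by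
  unfold Enu
  refine Finset.sum_nonneg fun a _ => Finset.sum_nonneg fun b _ =>
    Finset.sum_nonneg fun c _ => Finset.sum_nonneg fun d _ => ?_
  split
  · exact mul_nonneg (mul_nonneg (mul_nonneg (h0 _) (h0 _)) (h0 _)) (h0 _)
  · exact le_refl 0

lemma quad2_eq_Enu (ν : G → ℝ) (A : Finset G) :
    (∑ a1 ∈ A, ∑ a2 ∈ A, ∑ a3 ∈ A, ∑ a4 ∈ A,
        if a2⁻¹ * a1 = a4⁻¹ * a3 then (ν a1 * ν a2) * (ν a3 * ν a4) else 0)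
      = Enu ν A := by
  have hiff : ∀ a1 a2 a3 a4 : G, (a2⁻¹ * a1 = a4⁻¹ * a3) ↔ (a4 * a2⁻¹ = a3 * a1⁻¹) := by
    intro a1 a2 a3 a4
    constructor
    · intro h
      calc a4 * a2⁻¹ = a4 * (a2⁻¹ * a1) * a1⁻¹ := by group
        _ = a4 * (a4⁻¹ * a3) * a1⁻¹ := by rw [h]
        _ = a3 * a1⁻¹ := by group
    · intro h
      calc a2⁻¹ * a1 = a4⁻¹ * (a4 * a2⁻¹) * a1 := by group
        _ = a4⁻¹ * (a3 * a1⁻¹) * a1 := by rw [h]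
        _ = a4⁻¹ * a3 := by group
  calc (∑ a1 ∈ A, ∑ a2 ∈ A, ∑ a3 ∈ A, ∑ a4 ∈ A,
        if a2⁻¹ * a1 = a4⁻¹ * a3 then (ν a1 * ν a2) * (ν a3 * ν a4) else 0)
      = ∑ a1 ∈ A, ∑ a2 ∈ A, ∑ a3 ∈ A, ∑ a4 ∈ A,
          if a2⁻¹ * a4 = a1⁻¹ * a3 then (ν a4 * ν a2) * (ν a3 * ν a1) else 0 :=
        swap14 A (fun a1 a2 a3 a4 =>
          if a2⁻¹ * a1 = a4⁻¹ * a3 then (ν a1 * ν a2) * (ν a3 * ν a4) else 0)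
    _ = Enu ν A := by
        unfold Enu
        refine Finset.sum_congr rfl fun a1 _ => Finset.sum_congr rfl fun a2 _ =>
          Finset.sum_congr rfl fun a3 _ => Finset.sum_congr rfl fun a4 _ => ?_
        rw [if_congr (hiff a4 a2 a3 a1)
          (by ring : (ν a4 * ν a2) * (ν a3 * ν a1) = ν a1 * ν a2 * ν a3 * ν a4) rfl]

/-- Step 2: mixed energy is bounded by geometric mean of energies. -/
lemma Estep (ν : G → ℝ) (A B : Finset G) :
    (∑ a1 ∈ A, ∑ a2 ∈ B, ∑ a3 ∈ A, ∑ a4 ∈ B,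
        if a1 * a2⁻¹ = a3 * a4⁻¹ then (ν a1 * ν a2) * (ν a3 * ν a4) else 0)
      ≤ Real.sqrt (Enu ν A) * Real.sqrt (Enu ν B) := by
  set p2 : G → G → G := fun a b => b⁻¹ * a with hp2
  set S2 : Finset G := ((A ×ˢ A).image fun q => p2 q.1 q.2)
      ∪ ((B ×ˢ B).image fun q => p2 q.1 q.2) with hS2
  have hA : ∀ a ∈ A, ∀ b ∈ A, p2 a b ∈ S2 := fun a ha b hb =>
    Finset.mem_union_left _ (Finset.mem_image.2 ⟨(a, b), Finset.mem_product.2 ⟨ha, hb⟩, rfl⟩)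
  have hB : ∀ a ∈ B, ∀ b ∈ B, p2 a b ∈ S2 := fun a ha b hb =>
    Finset.mem_union_right _ (Finset.mem_image.2 ⟨(a, b), Finset.mem_product.2 ⟨ha, hb⟩, rfl⟩)
  have hiff : ∀ a1 a2 a3 a4 : G, (a1 * a2⁻¹ = a3 * a4⁻¹) ↔ (a3⁻¹ * a1 = a4⁻¹ * a2) := by
    intro a1 a2 a3 a4
    constructor
    · intro h
      calc a3⁻¹ * a1 = a3⁻¹ * (a1 * a2⁻¹) * a2 := by group
        _ = a3⁻¹ * (a3 * a4⁻¹) * a2 := by rw [h]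
        _ = a4⁻¹ * a2 := by group
    · intro h
      calc a1 * a2⁻¹ = a3 * (a3⁻¹ * a1) * a2⁻¹ := by group
        _ = a3 * (a4⁻¹ * a2) * a2⁻¹ := by rw [h]
        _ = a3 * a4⁻¹ := by group
  calc (∑ a1 ∈ A, ∑ a2 ∈ B, ∑ a3 ∈ A, ∑ a4 ∈ B,
        if a1 * a2⁻¹ = a3 * a4⁻¹ then (ν a1 * ν a2) * (ν a3 * ν a4) else 0)
      = ∑ a1 ∈ A, ∑ a3 ∈ A, ∑ a2 ∈ B, ∑ a4 ∈ B,
          if a1 * a2⁻¹ = a3 * a4⁻¹ then (ν a1 * ν a2) * (ν a3 * ν a4) else 0 :=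
        Finset.sum_congr rfl fun _ _ => Finset.sum_comm
    _ = ∑ a1 ∈ A, ∑ a3 ∈ A, ∑ a2 ∈ B, ∑ a4 ∈ B,
          if p2 a1 a3 = p2 a2 a4 then (ν a1 * ν a3) * (ν a2 * ν a4) else 0 := by
        refine Finset.sum_congr rfl fun a1 _ => Finset.sum_congr rfl fun a3 _ =>
          Finset.sum_congr rfl fun a2 _ => Finset.sum_congr rfl fun a4 _ => ?_
        rw [if_congr (hiff a1 a2 a3 a4)
          (by ring : (ν a1 * ν a2) * (ν a3 * ν a4) = (ν a1 * ν a3) * (ν a2 * ν a4)) rfl]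
    _ = ∑ x ∈ S2, Rw ν p2 A A x * Rw ν p2 B B x := pair_eq ν p2 A A B B S2 hA
    _ ≤ Real.sqrt (∑ x ∈ S2, Rw ν p2 A A x ^ 2) * Real.sqrt (∑ x ∈ S2, Rw ν p2 B B x ^ 2) :=
        Real.sum_mul_le_sqrt_mul_sqrt S2 _ _
    _ = Real.sqrt (Enu ν A) * Real.sqrt (Enu ν B) := by
        have eA : (∑ x ∈ S2, Rw ν p2 A A x ^ 2) = Enu ν A := by
          simp only [sq]
          rw [← pair_eq ν p2 A A A A S2 hA]
          simp only [hp2]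
          exact quad2_eq_Enu ν A
        have eB : (∑ x ∈ S2, Rw ν p2 B B x ^ 2) = Enu ν B := by
          simp only [sq]
          rw [← pair_eq ν p2 B B B B S2 hB]
          simp only [hp2]
          exact quad2_eq_Enu ν B
        rw [eA, eB]

end Stmt11Aux

/-- Let `G` be a group and `ν : G → [0,1]` a finitely supported
function.  For all finite nonempty subsets `A1, A2, A3, A4 ⊆ G`,
`Σ 1[a1·a2⁻¹ = a3·a4⁻¹]·ν(a1)ν(a2)ν(a3)ν(a4) ≤ Π_{i} E_ν(A_i)^{1/4}`. -/
theorem stmt11 {G : Type*} [Group G] [DecidableEq G] (ν : G → ℝ)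
    (h0 : ∀ g, 0 ≤ ν g) (h1 : ∀ g, ν g ≤ 1) (hfin : (Function.support ν).Finite)
    (A1 A2 A3 A4 : Finset G)
    (hA1 : A1.Nonempty) (hA2 : A2.Nonempty) (hA3 : A3.Nonempty) (hA4 : A4.Nonempty) :
    (∑ a1 ∈ A1, ∑ a2 ∈ A2, ∑ a3 ∈ A3, ∑ a4 ∈ A4,
        if a1 * a2⁻¹ = a3 * a4⁻¹ then ν a1 * ν a2 * ν a3 * ν a4 else 0)
      ≤ Enu ν A1 ^ ((1 : ℝ) / 4) * Enu ν A2 ^ ((1 : ℝ) / 4) *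
        Enu ν A3 ^ ((1 : ℝ) / 4) * Enu ν A4 ^ ((1 : ℝ) / 4) := by
  classical
  open Stmt11Aux in
  set p1 : G → G → G := fun a b => a * b⁻¹ with hp1
  set S1 : Finset G := ((A1 ×ˢ A2).image fun q => p1 q.1 q.2)
      ∪ ((A3 ×ˢ A4).image fun q => p1 q.1 q.2) with hS1
  have h12 : ∀ a ∈ A1, ∀ b ∈ A2, p1 a b ∈ S1 := fun a ha b hb =>
    Finset.mem_union_left _ (Finset.mem_image.2 ⟨(a, b), Finset.mem_product.2 ⟨ha, hb⟩, rfl⟩)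
  have h34 : ∀ a ∈ A3, ∀ b ∈ A4, p1 a b ∈ S1 := fun a ha b hb =>
    Finset.mem_union_right _ (Finset.mem_image.2 ⟨(a, b), Finset.mem_product.2 ⟨ha, hb⟩, rfl⟩)
  have hroot : ∀ z : ℝ, 0 ≤ z → Real.sqrt (Real.sqrt z) = z ^ ((1:ℝ)/4) := by
    intro z hz
    rw [show ((1:ℝ)/4) = (1/2 : ℝ) * (1/2 : ℝ) by norm_num, Real.rpow_mul hz,
      ← Real.sqrt_eq_rpow, ← Real.sqrt_eq_rpow]
  have hE1 : 0 ≤ Enu ν A1 := Stmt11Aux.Enu_nonneg ν h0 A1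
  have hE2 : 0 ≤ Enu ν A2 := Stmt11Aux.Enu_nonneg ν h0 A2
  have hE3 : 0 ≤ Enu ν A3 := Stmt11Aux.Enu_nonneg ν h0 A3
  have hE4 : 0 ≤ Enu ν A4 := Stmt11Aux.Enu_nonneg ν h0 A4
  calc (∑ a1 ∈ A1, ∑ a2 ∈ A2, ∑ a3 ∈ A3, ∑ a4 ∈ A4,
        if a1 * a2⁻¹ = a3 * a4⁻¹ then ν a1 * ν a2 * ν a3 * ν a4 else 0)
      = ∑ a1 ∈ A1, ∑ a2 ∈ A2, ∑ a3 ∈ A3, ∑ a4 ∈ A4,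
          if p1 a1 a2 = p1 a3 a4 then (ν a1 * ν a2) * (ν a3 * ν a4) else 0 := by
        refine Finset.sum_congr rfl fun a1 _ => Finset.sum_congr rfl fun a2 _ =>
          Finset.sum_congr rfl fun a3 _ => Finset.sum_congr rfl fun a4 _ => ?_
        rw [if_congr Iff.rfl
          (by ring : ν a1 * ν a2 * ν a3 * ν a4 = (ν a1 * ν a2) * (ν a3 * ν a4)) rfl]
    _ = ∑ x ∈ S1, Stmt11Aux.Rw ν p1 A1 A2 x * Stmt11Aux.Rw ν p1 A3 A4 x :=
        Stmt11Aux.pair_eq ν p1 A1 A2 A3 A4 S1 h12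
    _ ≤ Real.sqrt (∑ x ∈ S1, Stmt11Aux.Rw ν p1 A1 A2 x ^ 2) *
          Real.sqrt (∑ x ∈ S1, Stmt11Aux.Rw ν p1 A3 A4 x ^ 2) :=
        Real.sum_mul_le_sqrt_mul_sqrt S1 _ _
    _ ≤ Real.sqrt (Real.sqrt (Enu ν A1) * Real.sqrt (Enu ν A2)) *
          Real.sqrt (Real.sqrt (Enu ν A3) * Real.sqrt (Enu ν A4)) := by
        have e12 : (∑ x ∈ S1, Stmt11Aux.Rw ν p1 A1 A2 x ^ 2)
            ≤ Real.sqrt (Enu ν A1) * Real.sqrt (Enu ν A2) := by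
          simp only [sq]
          rw [← Stmt11Aux.pair_eq ν p1 A1 A2 A1 A2 S1 h12]
          simpa only [hp1] using Stmt11Aux.Estep ν A1 A2
        have e34 : (∑ x ∈ S1, Stmt11Aux.Rw ν p1 A3 A4 x ^ 2)
            ≤ Real.sqrt (Enu ν A3) * Real.sqrt (Enu ν A4) := by
          simp only [sq]
          rw [← Stmt11Aux.pair_eq ν p1 A3 A4 A3 A4 S1 h34]
          simpa only [hp1] using Stmt11Aux.Estep ν A3 A4
        exact mul_le_mul (Real.sqrt_le_sqrt e12) (Real.sqrt_le_sqrt e34)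
          (Real.sqrt_nonneg _) (Real.sqrt_nonneg _)
    _ = Enu ν A1 ^ ((1 : ℝ) / 4) * Enu ν A2 ^ ((1 : ℝ) / 4) *
          Enu ν A3 ^ ((1 : ℝ) / 4) * Enu ν A4 ^ ((1 : ℝ) / 4) := by
        rw [Real.sqrt_mul (Real.sqrt_nonneg _), Real.sqrt_mul (Real.sqrt_nonneg _),
          hroot _ hE1, hroot _ hE2, hroot _ hE3, hroot _ hE4]
        ring
end

section
/- Let G be a group and let ν : G → [0,1] be a finitely supported function. Then for every integer s ≥ 1 and all finite nonempty subsets A1, …, As ⊆ G one has E_ν(A1 ∪ ⋯ ∪ As)^{1/4} ≤ Σ_{i=1}^{s} E_ν(A_i)^{1/4}. -/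
open Finset

section stmt12aux

variable {G : Type*} [Group G] [DecidableEq G]

private lemma stmt12_expand_sum (ν : G → ℝ) (X S1 T1 S2 T2 : Finset G) (u v : G → G → G)
    (hX : ∀ a ∈ S1, ∀ b ∈ T1, u a b ∈ X) :
    ∑ x ∈ X, (∑ a ∈ S1, ∑ b ∈ T1, if u a b = x then ν a * ν b else 0) *
             (∑ a ∈ S2, ∑ b ∈ T2, if v a b = x then ν a * ν b else 0)
    = ∑ a1 ∈ S1, ∑ b1 ∈ T1, ∑ a2 ∈ S2, ∑ b2 ∈ T2,
        if u a1 b1 = v a2 b2 then ν a1 * ν b1 * (ν a2 * ν b2) else 0 := by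
  set Gf : G → ℝ := fun x => ∑ a ∈ S2, ∑ b ∈ T2, if v a b = x then ν a * ν b else 0 with hGf
  have key : ∀ a1 ∈ S1, ∀ b1 ∈ T1,
      ∑ x ∈ X, (if u a1 b1 = x then ν a1 * ν b1 else 0) * Gf x
      = ∑ a2 ∈ S2, ∑ b2 ∈ T2, if u a1 b1 = v a2 b2 then ν a1 * ν b1 * (ν a2 * ν b2) else 0 := by
    intro a1 ha1 b1 hb1
    have e1 : ∀ x ∈ X, (if u a1 b1 = x then ν a1 * ν b1 else 0) * Gf x
        = if x = u a1 b1 then (ν a1 * ν b1) * Gf x else 0 := by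
      intro x _
      by_cases h : u a1 b1 = x
      · simp [h]
      · simp [h, Ne.symm h]
    rw [Finset.sum_congr rfl e1, Finset.sum_ite_eq' X (u a1 b1), if_pos (hX a1 ha1 b1 hb1)]
    rw [hGf]
    simp only [Finset.mul_sum, mul_ite, mul_zero]
    refine Finset.sum_congr rfl fun a2 _ => Finset.sum_congr rfl fun b2 _ => ?_
    exact if_congr eq_comm rfl rfl
  calc ∑ x ∈ X, (∑ a ∈ S1, ∑ b ∈ T1, if u a b = x then ν a * ν b else 0) * Gf x
      = ∑ x ∈ X, ∑ a1 ∈ S1, ∑ b1 ∈ T1, (if u a1 b1 = x then ν a1 * ν b1 else 0) * Gf x := by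
        simp only [Finset.sum_mul]
    _ = ∑ a1 ∈ S1, ∑ x ∈ X, ∑ b1 ∈ T1, (if u a1 b1 = x then ν a1 * ν b1 else 0) * Gf x :=
        Finset.sum_comm
    _ = ∑ a1 ∈ S1, ∑ b1 ∈ T1, ∑ x ∈ X, (if u a1 b1 = x then ν a1 * ν b1 else 0) * Gf x :=
        Finset.sum_congr rfl fun _ _ => Finset.sum_comm
    _ = ∑ a1 ∈ S1, ∑ b1 ∈ T1, ∑ a2 ∈ S2, ∑ b2 ∈ T2,
          if u a1 b1 = v a2 b2 then ν a1 * ν b1 * (ν a2 * ν b2) else 0 :=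
        Finset.sum_congr rfl fun a1 ha1 => Finset.sum_congr rfl fun b1 hb1 => key a1 ha1 b1 hb1

/-- swap the middle two of four nested sums -/
private lemma stmt12_swap23 {M : Type*} [AddCommMonoid M] (S1 S2 S3 S4 : Finset G)
    (f : G → G → G → G → M) :
    (∑ a ∈ S1, ∑ b ∈ S2, ∑ c ∈ S3, ∑ d ∈ S4, f a b c d)
      = ∑ a ∈ S1, ∑ c ∈ S3, ∑ b ∈ S2, ∑ d ∈ S4, f a b c d :=
  Finset.sum_congr rfl fun _ _ => Finset.sum_comm

/-- `q_{S,T}(x) = ∑_{a∈S,b∈T, b⁻¹a = x} ν(a)ν(b)` -/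
private noncomputable def stmt12_q (ν : G → ℝ) (S T : Finset G) (x : G) : ℝ :=
  ∑ a ∈ S, ∑ b ∈ T, if b⁻¹ * a = x then ν a * ν b else 0

/-- `r_S(x) = ∑_{a,b∈S, ab⁻¹ = x} ν(a)ν(b)` -/
private noncomputable def stmt12_r (ν : G → ℝ) (S : Finset G) (x : G) : ℝ :=
  ∑ a ∈ S, ∑ b ∈ S, if a * b⁻¹ = x then ν a * ν b else 0

private lemma stmt12_q_nonneg (ν : G → ℝ) (h0 : ∀ g, 0 ≤ ν g) (S T : Finset G) (x : G) :
    0 ≤ stmt12_q ν S T x := by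
  refine Finset.sum_nonneg fun a _ => Finset.sum_nonneg fun b _ => ?_
  split_ifs
  · exact mul_nonneg (h0 a) (h0 b)
  · exact le_rfl

private lemma stmt12_iff1 (a1 a2 a3 a4 : G) :
    (a1 * a2⁻¹ = a3 * a4⁻¹) ↔ (a3⁻¹ * a1 = a4⁻¹ * a2) := by
  constructor <;> intro h
  · have : a1 = a3 * a4⁻¹ * a2 := by rw [← h]; group
    rw [this]; group
  · have : a1 = a3 * (a4⁻¹ * a2) := by rw [← h]; group
    rw [this]; group

private lemma stmt12_iff2 (a1 b1 a2 b2 : G) :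
    (b1⁻¹ * a1 = b2⁻¹ * a2) ↔ (a1 * a2⁻¹ = b1 * b2⁻¹) := by
  constructor <;> intro h
  · have : a1 = b1 * (b2⁻¹ * a2) := by rw [← h]; group
    rw [this]; group
  · have : a1 = b1 * b2⁻¹ * a2 := by rw [← h]; group
    rw [this]; group

/-- `Enu S = ∑_x q_{S,S}(x)^2` provided `X` contains all `b⁻¹a`. -/
private lemma stmt12_enu_eq_sum_q_sq (ν : G → ℝ) (X S : Finset G)
    (hX : ∀ a ∈ S, ∀ b ∈ S, b⁻¹ * a ∈ X) :
    Enu ν S = ∑ x ∈ X, stmt12_q ν S S x ^ 2 := by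
  have e := stmt12_expand_sum ν X S S S S (fun a b => b⁻¹ * a) (fun a b => b⁻¹ * a) hX
  simp only [stmt12_q, sq]
  rw [e, Enu, stmt12_swap23]
  refine Finset.sum_congr rfl fun a1 _ => Finset.sum_congr rfl fun a3 _ =>
    Finset.sum_congr rfl fun a2 _ => Finset.sum_congr rfl fun a4 _ => ?_
  rw [if_congr (stmt12_iff1 a1 a2 a3 a4) rfl rfl]
  exact if_congr Iff.rfl (by ring) rfl

/-- `∑_x q_{S,T}(x)^2 = ∑_x r_S(x) r_T(x)`. -/
private lemma stmt12_sum_q_sq_eq (ν : G → ℝ) (X S T : Finset G)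
    (hq : ∀ a ∈ S, ∀ b ∈ T, b⁻¹ * a ∈ X) (hr : ∀ a ∈ S, ∀ b ∈ S, a * b⁻¹ ∈ X) :
    ∑ x ∈ X, stmt12_q ν S T x ^ 2 = ∑ x ∈ X, stmt12_r ν S x * stmt12_r ν T x := by
  have e1 := stmt12_expand_sum ν X S T S T (fun a b => b⁻¹ * a) (fun a b => b⁻¹ * a) hq
  have e2 := stmt12_expand_sum ν X S S T T (fun a b => a * b⁻¹) (fun a b => a * b⁻¹) hr
  simp only [stmt12_q, stmt12_r, sq]
  rw [e1, e2, stmt12_swap23]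
  refine Finset.sum_congr rfl fun a1 _ => Finset.sum_congr rfl fun a2 _ =>
    Finset.sum_congr rfl fun b1 _ => Finset.sum_congr rfl fun b2 _ => ?_
  rw [if_congr (stmt12_iff2 a1 b1 a2 b2) rfl rfl]
  exact if_congr Iff.rfl (by ring) rfl

/-- `∑_x r_S(x)^2 = Enu S`. -/
private lemma stmt12_sum_r_sq (ν : G → ℝ) (X S : Finset G)
    (hr : ∀ a ∈ S, ∀ b ∈ S, a * b⁻¹ ∈ X) :
    ∑ x ∈ X, stmt12_r ν S x ^ 2 = Enu ν S := by
  have e := stmt12_expand_sum ν X S S S S (fun a b => a * b⁻¹) (fun a b => a * b⁻¹) hr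
  simp only [stmt12_r, sq]
  rw [e, Enu]
  refine Finset.sum_congr rfl fun a1 _ => Finset.sum_congr rfl fun a2 _ =>
    Finset.sum_congr rfl fun a3 _ => Finset.sum_congr rfl fun a4 _ => ?_
  exact if_congr Iff.rfl (by ring) rfl

end stmt12aux

private lemma stmt12_sum5_comm {ι κ M : Type*} [AddCommMonoid M] (X : Finset ι)
    (I J K L : Finset κ) (f : ι → κ → κ → κ → κ → M) :
    (∑ x ∈ X, ∑ i ∈ I, ∑ j ∈ J, ∑ k ∈ K, ∑ l ∈ L, f x i j k l)
      = ∑ i ∈ I, ∑ j ∈ J, ∑ k ∈ K, ∑ l ∈ L, ∑ x ∈ X, f x i j k l :=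
  calc (∑ x ∈ X, ∑ i ∈ I, ∑ j ∈ J, ∑ k ∈ K, ∑ l ∈ L, f x i j k l)
      = ∑ i ∈ I, ∑ x ∈ X, ∑ j ∈ J, ∑ k ∈ K, ∑ l ∈ L, f x i j k l := Finset.sum_comm
    _ = ∑ i ∈ I, ∑ j ∈ J, ∑ x ∈ X, ∑ k ∈ K, ∑ l ∈ L, f x i j k l :=
        Finset.sum_congr rfl fun _ _ => Finset.sum_comm
    _ = ∑ i ∈ I, ∑ j ∈ J, ∑ k ∈ K, ∑ x ∈ X, ∑ l ∈ L, f x i j k l :=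
        Finset.sum_congr rfl fun _ _ => Finset.sum_congr rfl fun _ _ => Finset.sum_comm
    _ = ∑ i ∈ I, ∑ j ∈ J, ∑ k ∈ K, ∑ l ∈ L, ∑ x ∈ X, f x i j k l :=
        Finset.sum_congr rfl fun _ _ => Finset.sum_congr rfl fun _ _ =>
          Finset.sum_congr rfl fun _ _ => Finset.sum_comm

private lemma stmt12_sum_biUnion_le {G : Type*} [DecidableEq G] {ι : Type*} [DecidableEq ι]
    (s : Finset ι) (t : ι → Finset G) (f : G → ℝ) (hf : ∀ x, 0 ≤ f x) :
    ∑ a ∈ s.biUnion t, f a ≤ ∑ i ∈ s, ∑ a ∈ t i, f a := by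
  induction s using Finset.induction_on with
  | empty => simp
  | insert _ _ h ih =>
    rename_i c s'
    rw [Finset.biUnion_insert, Finset.sum_insert h]
    have hunion : ∑ a ∈ t c ∪ s'.biUnion t, f a ≤ (∑ a ∈ t c, f a) + ∑ a ∈ s'.biUnion t, f a := by
      have h2 := Finset.sum_union_inter (s₁ := t c) (s₂ := s'.biUnion t) (f := f)
      have h3 : 0 ≤ ∑ a ∈ t c ∩ s'.biUnion t, f a := Finset.sum_nonneg fun a _ => hf a
      linarith
    exact hunion.trans (by linarith [ih])

/-- Let `G` be a group and `ν : G → [0,1]` a finitely supported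
function.  For every `s ≥ 1` and all finite nonempty subsets `A1, …, As ⊆ G`,
`E_ν(A1 ∪ ⋯ ∪ As)^{1/4} ≤ Σ_i E_ν(A_i)^{1/4}`. -/
theorem stmt12 {G : Type*} [Group G] [DecidableEq G] (ν : G → ℝ)
    (h0 : ∀ g, 0 ≤ ν g) (h1 : ∀ g, ν g ≤ 1) (hfin : (Function.support ν).Finite)
    (s : ℕ) (hs : 1 ≤ s) (A : Fin s → Finset G) (hA : ∀ i, (A i).Nonempty) :
    Enu ν (Finset.univ.biUnion A) ^ ((1 : ℝ) / 4)
      ≤ ∑ i : Fin s, Enu ν (A i) ^ ((1 : ℝ) / 4) := by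
  classical
  set U : Finset G := Finset.univ.biUnion A with hU
  have hAU : ∀ i, A i ⊆ U := fun i a ha => Finset.mem_biUnion.2 ⟨i, Finset.mem_univ i, ha⟩
  set X : Finset G := ((U ×ˢ U).image fun p => p.2⁻¹ * p.1) ∪
      ((U ×ˢ U).image fun p => p.1 * p.2⁻¹) with hXdef
  have hq : ∀ S T : Finset G, S ⊆ U → T ⊆ U → ∀ a ∈ S, ∀ b ∈ T, b⁻¹ * a ∈ X := by
    intro S T hS hT a ha b hb
    exact Finset.mem_union_left _ (Finset.mem_image.2
      ⟨(a, b), Finset.mem_product.2 ⟨hS ha, hT hb⟩, rfl⟩)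
  have hr : ∀ S T : Finset G, S ⊆ U → T ⊆ U → ∀ a ∈ S, ∀ b ∈ T, a * b⁻¹ ∈ X := by
    intro S T hS hT a ha b hb
    exact Finset.mem_union_right _ (Finset.mem_image.2
      ⟨(a, b), Finset.mem_product.2 ⟨hS ha, hT hb⟩, rfl⟩)
  -- nonnegativity of energies
  have hE0 : ∀ S : Finset G, 0 ≤ Enu ν S := by
    intro S
    refine Finset.sum_nonneg fun a _ => Finset.sum_nonneg fun b _ =>
      Finset.sum_nonneg fun c _ => Finset.sum_nonneg fun d _ => ?_
    split_ifs
    · exact mul_nonneg (mul_nonneg (mul_nonneg (h0 a) (h0 b)) (h0 c)) (h0 d)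
    · exact le_rfl
  have hterm0 : ∀ (x a b : G), (0:ℝ) ≤ if b⁻¹ * a = x then ν a * ν b else 0 := by
    intro x a b
    split_ifs
    · exact mul_nonneg (h0 a) (h0 b)
    · exact le_rfl
  -- pointwise union bound
  have hpoint : ∀ x : G, stmt12_q ν U U x
      ≤ ∑ i : Fin s, ∑ j : Fin s, stmt12_q ν (A i) (A j) x := by
    intro x
    have inner_bound : ∀ a : G,
        (∑ b ∈ U, if b⁻¹ * a = x then ν a * ν b else 0)
          ≤ ∑ j : Fin s, ∑ b ∈ A j, if b⁻¹ * a = x then ν a * ν b else 0 :=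
      fun a => stmt12_sum_biUnion_le Finset.univ A _ (fun b => hterm0 x a b)
    calc stmt12_q ν U U x
        = ∑ a ∈ U, ∑ b ∈ U, if b⁻¹ * a = x then ν a * ν b else 0 := rfl
      _ ≤ ∑ a ∈ U, ∑ j : Fin s, ∑ b ∈ A j, if b⁻¹ * a = x then ν a * ν b else 0 :=
          Finset.sum_le_sum fun a _ => inner_bound a
      _ = ∑ j : Fin s, ∑ a ∈ U, ∑ b ∈ A j, if b⁻¹ * a = x then ν a * ν b else 0 :=
          Finset.sum_comm
      _ ≤ ∑ j : Fin s, ∑ i : Fin s, ∑ a ∈ A i, ∑ b ∈ A j, if b⁻¹ * a = x then ν a * ν b else 0 :=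
          Finset.sum_le_sum fun j _ => stmt12_sum_biUnion_le Finset.univ A _
            (fun a => Finset.sum_nonneg fun b _ => hterm0 x a b)
      _ = ∑ i : Fin s, ∑ j : Fin s, stmt12_q ν (A i) (A j) x := Finset.sum_comm
  -- abbreviation
  set d : Fin s → ℝ := fun i => Real.sqrt (Real.sqrt (Enu ν (A i))) with hd
  have hd0 : ∀ i, 0 ≤ d i := fun i => Real.sqrt_nonneg _
  -- bound each cross term
  have hcross : ∀ i j k l : Fin s,
      ∑ x ∈ X, stmt12_q ν (A i) (A j) x * stmt12_q ν (A k) (A l) x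
        ≤ d i * d j * (d k * d l) := by
    intro i j k l
    have hsq : ∀ i j : Fin s, ∑ x ∈ X, stmt12_q ν (A i) (A j) x ^ 2
        ≤ Real.sqrt (Enu ν (A i)) * Real.sqrt (Enu ν (A j)) := by
      intro i j
      rw [stmt12_sum_q_sq_eq ν X (A i) (A j) (hq _ _ (hAU i) (hAU j)) (hr _ _ (hAU i) (hAU i))]
      calc ∑ x ∈ X, stmt12_r ν (A i) x * stmt12_r ν (A j) x
          ≤ Real.sqrt (∑ x ∈ X, stmt12_r ν (A i) x ^ 2) *
            Real.sqrt (∑ x ∈ X, stmt12_r ν (A j) x ^ 2) :=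
            Real.sum_mul_le_sqrt_mul_sqrt _ _ _
        _ = Real.sqrt (Enu ν (A i)) * Real.sqrt (Enu ν (A j)) := by
            rw [stmt12_sum_r_sq ν X (A i) (hr _ _ (hAU i) (hAU i)),
              stmt12_sum_r_sq ν X (A j) (hr _ _ (hAU j) (hAU j))]
    have hroot : ∀ i j : Fin s,
        Real.sqrt (∑ x ∈ X, stmt12_q ν (A i) (A j) x ^ 2) ≤ d i * d j := by
      intro i j
      calc Real.sqrt (∑ x ∈ X, stmt12_q ν (A i) (A j) x ^ 2)
          ≤ Real.sqrt (Real.sqrt (Enu ν (A i)) * Real.sqrt (Enu ν (A j))) :=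
            Real.sqrt_le_sqrt (hsq i j)
        _ = d i * d j := by rw [Real.sqrt_mul (Real.sqrt_nonneg _)]
    calc ∑ x ∈ X, stmt12_q ν (A i) (A j) x * stmt12_q ν (A k) (A l) x
        ≤ Real.sqrt (∑ x ∈ X, stmt12_q ν (A i) (A j) x ^ 2) *
          Real.sqrt (∑ x ∈ X, stmt12_q ν (A k) (A l) x ^ 2) :=
          Real.sum_mul_le_sqrt_mul_sqrt _ _ _
      _ ≤ d i * d j * (d k * d l) := by
          have h1' := hroot i j
          have h2' := hroot k l
          have := mul_le_mul h1' h2' (Real.sqrt_nonneg _)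
            (le_trans (Real.sqrt_nonneg _) h1')
          exact this
  -- main chain
  have hmain : Enu ν U ≤ (∑ i : Fin s, d i) ^ 4 := by
    calc Enu ν U = ∑ x ∈ X, stmt12_q ν U U x ^ 2 :=
          stmt12_enu_eq_sum_q_sq ν X U (hq U U le_rfl le_rfl)
      _ ≤ ∑ x ∈ X, (∑ i : Fin s, ∑ j : Fin s, stmt12_q ν (A i) (A j) x) ^ 2 :=
          Finset.sum_le_sum fun x _ => pow_le_pow_left₀
            (stmt12_q_nonneg ν h0 U U x) (hpoint x) 2
      _ = ∑ x ∈ X, ∑ i : Fin s, ∑ k : Fin s, ∑ j : Fin s, ∑ l : Fin s,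
            stmt12_q ν (A i) (A j) x * stmt12_q ν (A k) (A l) x := by
          refine Finset.sum_congr rfl fun x _ => ?_
          rw [sq, Finset.sum_mul_sum]
          exact Finset.sum_congr rfl fun i _ => Finset.sum_congr rfl fun k _ =>
            Finset.sum_mul_sum _ _ _ _
      _ = ∑ i : Fin s, ∑ k : Fin s, ∑ j : Fin s, ∑ l : Fin s, ∑ x ∈ X,
            stmt12_q ν (A i) (A j) x * stmt12_q ν (A k) (A l) x :=
          stmt12_sum5_comm X Finset.univ Finset.univ Finset.univ Finset.univ _
      _ ≤ ∑ i : Fin s, ∑ k : Fin s, ∑ j : Fin s, ∑ l : Fin s, d i * d j * (d k * d l) :=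
          Finset.sum_le_sum fun i _ => Finset.sum_le_sum fun k _ =>
            Finset.sum_le_sum fun j _ => Finset.sum_le_sum fun l _ => hcross i j k l
      _ = (∑ i : Fin s, d i) ^ 4 := by
          simp only [← Finset.mul_sum, ← Finset.sum_mul]
          ring
  have hdsum0 : 0 ≤ ∑ i : Fin s, d i := Finset.sum_nonneg fun i _ => hd0 i
  have hfinal : Enu ν U ^ ((1:ℝ)/4) ≤ ∑ i : Fin s, d i := by
    calc Enu ν U ^ ((1:ℝ)/4) ≤ ((∑ i : Fin s, d i) ^ 4) ^ ((1:ℝ)/4) :=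
          Real.rpow_le_rpow (hE0 U) hmain (by norm_num)
      _ = ∑ i : Fin s, d i := by
          rw [← Real.rpow_natCast (∑ i : Fin s, d i) 4, ← Real.rpow_mul hdsum0]
          norm_num
  have hdeq : ∀ i, d i = Enu ν (A i) ^ ((1:ℝ)/4) := by
    intro i
    simp only [hd]
    rw [Real.sqrt_eq_rpow, Real.sqrt_eq_rpow, ← Real.rpow_mul (hE0 (A i))]
    norm_num
  calc Enu ν U ^ ((1:ℝ)/4) ≤ ∑ i : Fin s, d i := hfinal
    _ = ∑ i : Fin s, Enu ν (A i) ^ ((1:ℝ)/4) := Finset.sum_congr rfl fun i _ => hdeq i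
end

section
/- There is an absolute constant C > 0 such that for every finite nonempty set A ⊆ ℝ and every real τ ≥ 1, the set Q_τ = {z ∈ ℝ : τ ≤ q(z) < 2τ} satisfies |Q_τ| ≤ C·|A + A|^2/τ^2, where for z ∈ ℝ we set q(z) = #{(a,b) ∈ (A\{0})^2 : a = z·b}. -/
open Finset
open scoped Pointwise

/-- `q(z)`: the number of pairs `(a,b) ∈ (A\{0})²` with `a = z·b`. -/
noncomputable def qfun (A : Finset ℝ) (z : ℝ) : ℕ :=
  (((A.erase 0) ×ˢ (A.erase 0)).filter (fun p => p.1 = z * p.2)).card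


noncomputable def lcnt (P : Finset (ℝ × ℝ)) (z : ℝ) : ℕ :=
  (P.filter (fun p => p.1 = z * p.2)).card

lemma lcnt_le_image_snd (P : Finset (ℝ × ℝ)) (z : ℝ) :
    lcnt P z ≤ (P.image Prod.snd).card := by
  apply Finset.card_le_card_of_injOn Prod.snd
  · intro p hp
    simp only [Finset.mem_coe, Finset.mem_filter] at hp
    exact Finset.mem_image_of_mem _ hp.1
  · intro p hp q hq h
    simp only [Finset.coe_filter, Set.mem_setOf_eq] at hp hq
    exact Prod.ext (by rw [hp.2, hq.2, h]) h

lemma solymosi_aux (P : Finset (ℝ × ℝ)) (hP : ∀ p ∈ P, 0 < p.2) (σ : ℝ) (hσ : 0 < σ) :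
    ∀ n : ℕ, ∀ T : Finset ℝ, T.card ≤ n → ∀ hT : T.Nonempty,
      (∀ z ∈ T, σ ≤ (lcnt P z : ℝ)) →
      ((T.card : ℝ) - 1) * σ ^ 2 ≤
        (((P + P).filter (fun s => s.1 < T.max' hT * s.2)).card : ℝ) := by
  have hPP : ∀ s ∈ P + P, 0 < s.2 := by
    intro s hs
    rw [Finset.mem_add] at hs
    obtain ⟨p, hp, q, hq, rfl⟩ := hs
    have := hP p hp; have := hP q hq
    simp only [Prod.snd_add]
    linarith
  intro n
  induction n with
  | zero =>
    intro T hc hT _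
    rw [Nat.le_zero, Finset.card_eq_zero] at hc
    simp [hc] at hT
  | succ n ih =>
    intro T hc hT hq
    by_cases h1 : T.card ≤ 1
    · have h0 : ((T.card : ℝ) - 1) ≤ 0 := by
        have : (T.card : ℝ) ≤ 1 := by exact_mod_cast h1
        linarith
      have : ((T.card : ℝ) - 1) * σ ^ 2 ≤ 0 :=
        mul_nonpos_of_nonpos_of_nonneg h0 (by positivity)
      exact this.trans (by positivity)
    · push_neg at h1
      set m := T.max' hT with hm
      set T' := T.erase m with hT'def
      have hmT : m ∈ T := T.max'_mem hT
      have hT'card : T'.card = T.card - 1 := Finset.card_erase_of_mem hmT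
      have hT'ne : T'.Nonempty := by
        rw [← Finset.card_pos, hT'card]; omega
      set m' := T'.max' hT'ne with hm'
      have hm'T' : m' ∈ T' := T'.max'_mem hT'ne
      have hm'T : m' ∈ T := Finset.mem_of_mem_erase hm'T'
      have hm'ne : m' ≠ m := Finset.ne_of_mem_erase hm'T'
      have hm'lt : m' < m := lt_of_le_of_ne (T.le_max' _ hm'T) hm'ne
      have IH := ih T' (by omega) hT'ne (fun z hz => hq z (Finset.mem_of_mem_erase hz))
      set L1 := P.filter (fun p => p.1 = m' * p.2) with hL1
      set L2 := P.filter (fun p => p.1 = m * p.2) with hL2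
      set S := (L1 ×ˢ L2).image (fun pq => pq.1 + pq.2) with hSdef
      set F := (P + P).filter (fun s => s.1 < m * s.2) with hF
      set F' := (P + P).filter (fun s => s.1 < m' * s.2) with hF'
      have hScard : S.card = L1.card * L2.card := by
        rw [hSdef, Finset.card_image_of_injOn, Finset.card_product]
        rintro ⟨⟨a, b⟩, ⟨c, d⟩⟩ hx ⟨⟨a', b'⟩, ⟨c', d'⟩⟩ hy hxy
        simp only [Finset.mem_coe, Finset.mem_product, hL1, hL2, Finset.mem_filter] at hx hy
        simp only [Prod.ext_iff, Prod.fst_add, Prod.snd_add] at hxy ⊢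
        obtain ⟨⟨-, ha⟩, ⟨-, hc⟩⟩ := hx
        obtain ⟨⟨-, ha'⟩, ⟨-, hc'⟩⟩ := hy
        have hmm : m - m' ≠ 0 := sub_ne_zero.mpr hm'lt.ne'
        have hd : d = d' := by
          have h2 : (m - m') * d = (m - m') * d' := by
            linear_combination hxy.1 - m' * hxy.2 - ha + ha' - hc + hc'
          exact mul_left_cancel₀ hmm h2
        have hb : b = b' := by linarith [hxy.2]
        refine ⟨⟨?_, hb⟩, ?_, hd⟩
        · rw [ha, ha', hb]
        · rw [hc, hc', hd]
      have hSsub : S ⊆ F := by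
        intro s hs
        rw [hSdef, Finset.mem_image] at hs
        obtain ⟨⟨p, q⟩, hpq, rfl⟩ := hs
        rw [Finset.mem_product] at hpq
        simp only [hL1, hL2, Finset.mem_filter] at hpq
        obtain ⟨⟨hpP, hp⟩, hqP, hqe⟩ := hpq
        rw [hF, Finset.mem_filter]
        refine ⟨Finset.add_mem_add hpP hqP, ?_⟩
        simp only [Prod.fst_add, Prod.snd_add]
        have hp2 := hP p hpP
        nlinarith [hP q hqP]
      have hSdisj : Disjoint F' S := by
        rw [Finset.disjoint_right]
        intro s hs
        rw [hSdef, Finset.mem_image] at hs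
        obtain ⟨⟨p, q⟩, hpq, rfl⟩ := hs
        rw [Finset.mem_product] at hpq
        simp only [hL1, hL2, Finset.mem_filter] at hpq
        obtain ⟨⟨hpP, hp⟩, hqP, hqe⟩ := hpq
        rw [hF', Finset.mem_filter]
        simp only [Prod.fst_add, Prod.snd_add]
        push_neg
        intro _
        nlinarith [hP q hqP]
      have hF'F : F' ⊆ F := by
        intro s hs
        rw [hF', Finset.mem_filter] at hs
        rw [hF, Finset.mem_filter]
        have := hPP s hs.1
        refine ⟨hs.1, ?_⟩
        nlinarith [hs.2]
      have hcard : F'.card + S.card ≤ F.card := by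
        rw [← Finset.card_union_of_disjoint hSdisj]
        exact Finset.card_le_card (Finset.union_subset hF'F hSsub)
      have hσL : σ ^ 2 ≤ (L1.card : ℝ) * L2.card := by
        have h1 : σ ≤ (L1.card : ℝ) := hq m' hm'T
        have h2 : σ ≤ (L2.card : ℝ) := hq m hmT
        nlinarith
      have hcastcard : (T'.card : ℝ) = (T.card : ℝ) - 1 := by
        rw [hT'card, Nat.cast_sub (by omega)]; norm_num
      calc ((T.card : ℝ) - 1) * σ ^ 2
          = ((T'.card : ℝ) - 1) * σ ^ 2 + σ ^ 2 := by rw [hcastcard]; ring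
        _ ≤ (F'.card : ℝ) + (L1.card : ℝ) * L2.card := add_le_add IH hσL
        _ = (F'.card : ℝ) + (S.card : ℝ) := by rw [hScard]; push_cast; ring
        _ ≤ (F.card : ℝ) := by exact_mod_cast hcard

lemma solymosi (P : Finset (ℝ × ℝ)) (hP : ∀ p ∈ P, 0 < p.2) (σ : ℝ) (hσ : 0 < σ)
    (T : Finset ℝ) (hq : ∀ z ∈ T, σ ≤ (lcnt P z : ℝ)) :
    ((T.card : ℝ) - 1) * σ ^ 2 ≤ ((P + P).card : ℝ) := by
  rcases T.eq_empty_or_nonempty with rfl | hT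
  · simp only [Finset.card_empty, Nat.cast_zero]
    nlinarith [Nat.cast_nonneg (α := ℝ) (P + P).card]
  · refine (solymosi_aux P hP σ hσ T.card T le_rfl hT hq).trans ?_
    exact_mod_cast Finset.card_le_card (Finset.filter_subset _ _)

/-- There is an absolute constant `C > 0` such that for every finite
nonempty `A ⊆ ℝ` and every real `τ ≥ 1`, the set `Q_τ = {z : τ ≤ q(z) < 2τ}` satisfies
`|Q_τ| ≤ C·|A + A|²/τ²`. -/
theorem stmt16 : ∃ C : ℝ, 0 < C ∧ ∀ (A : Finset ℝ) (τ : ℝ), A.Nonempty → 1 ≤ τ →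
    (({z : ℝ | τ ≤ (qfun A z : ℝ) ∧ (qfun A z : ℝ) < 2 * τ}).ncard : ℝ)
      ≤ C * ((A + A).card : ℝ) ^ 2 / τ ^ 2 := by
  classical
  refine ⟨16, by norm_num, ?_⟩
  intro A τ hA hτ
  have hτ0 : (0 : ℝ) < τ := by linarith
  set K : ℝ := ((A + A).card : ℝ) with hK
  have hK0 : (0 : ℝ) ≤ K := Nat.cast_nonneg _
  have hAK : (A.card : ℝ) ≤ K := by
    rw [hK]
    have := Finset.card_le_card_add_left (s := A) (t := A) hA
    exact_mod_cast this
  set A' := A.erase 0 with hA'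
  have hA'A : A' ⊆ A := Finset.erase_subset _ _
  set Apos := A'.filter (fun b => 0 < b) with hApos
  set Aneg := A'.filter (fun b => b < 0) with hAneg
  set Pp := A' ×ˢ Apos with hPp
  set Pm := (A' ×ˢ Aneg).image (fun p => (p.1, -p.2)) with hPmdef
  -- splitting q(z)
  have hA'union : A' ×ˢ Apos ∪ A' ×ˢ Aneg = A' ×ˢ A' := by
    rw [← Finset.product_union]
    congr 1
    ext b
    simp only [hApos, hAneg, Finset.mem_union, Finset.mem_filter, hA', Finset.mem_erase]
    constructor
    · rintro (⟨h, -⟩ | ⟨h, -⟩) <;> exact h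
    · intro h
      rcases h.1.lt_or_gt with hb | hb
      · right; exact ⟨h, hb⟩
      · left; exact ⟨h, hb⟩
  have hsplit : ∀ z, qfun A z = lcnt Pp z + lcnt (A' ×ˢ Aneg) z := by
    intro z
    rw [qfun, lcnt, lcnt, ← Finset.card_union_of_disjoint, ← Finset.filter_union, hPp,
      hA'union, hA']
    rw [Finset.disjoint_left]
    intro p hp hp'
    simp only [Finset.mem_filter, hPp, hApos, hAneg, Finset.mem_product] at hp hp'
    linarith [hp.1.2.2, hp'.1.2.2]
  -- negative side via reflection
  have hinj : Function.Injective (fun p : ℝ × ℝ => (p.1, -p.2)) := by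
    intro p q h
    have h' : p.1 = q.1 ∧ -p.2 = -q.2 := by simpa [Prod.ext_iff] using h
    exact Prod.ext h'.1 (neg_injective h'.2)
  have hneg : ∀ z, lcnt (A' ×ˢ Aneg) z = lcnt Pm (-z) := by
    intro z
    rw [lcnt, lcnt, hPmdef, Finset.filter_image, Finset.card_image_of_injective _ hinj]
    congr 1
    apply Finset.filter_congr
    intro p _
    simp only
    constructor
    · intro h; rw [h]; ring
    · intro h
      have h2 : p.1 = -z * -p.2 := h
      linear_combination h2
  have hPppos : ∀ p ∈ Pp, 0 < p.2 := by
    intro p hp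
    rw [hPp, Finset.mem_product] at hp
    exact (Finset.mem_filter.mp hp.2).2
  have hPmpos : ∀ p ∈ Pm, 0 < p.2 := by
    intro p hp
    rw [hPmdef, Finset.mem_image] at hp
    obtain ⟨q, hq, rfl⟩ := hp
    rw [Finset.mem_product] at hq
    have := (Finset.mem_filter.mp hq.2).2
    simpa using this
  -- the finset Q
  set Qf := ((A' ×ˢ A').image (fun p => p.1 / p.2)).filter
      (fun z => τ ≤ (qfun A z : ℝ) ∧ (qfun A z : ℝ) < 2 * τ) with hQf
  have hqcard : ∀ z, qfun A z = ((A' ×ˢ A').filter (fun p => p.1 = z * p.2)).card := by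
    intro z; rw [hA']; rfl
  have hset : {z : ℝ | τ ≤ (qfun A z : ℝ) ∧ (qfun A z : ℝ) < 2 * τ} = ↑Qf := by
    ext z
    simp only [Set.mem_setOf_eq, hQf, Finset.coe_filter, Set.mem_setOf_eq, Finset.mem_image]
    constructor
    · rintro ⟨h1, h2⟩
      have hpos : 0 < ((A' ×ˢ A').filter (fun p => p.1 = z * p.2)).card := by
        by_contra h
        push_neg at h
        have h0 : qfun A z = 0 := by rw [hqcard z]; omega
        rw [h0] at h1
        norm_num at h1
        linarith
      obtain ⟨p, hp⟩ := Finset.card_pos.mp hpos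
      rw [Finset.mem_filter] at hp
      have hp2 : p.2 ≠ 0 := by
        have := (Finset.mem_product.mp hp.1).2
        rw [hA', Finset.mem_erase] at this
        exact this.1
      refine ⟨⟨p, hp.1, ?_⟩, h1, h2⟩
      rw [hp.2, mul_div_assoc, div_self hp2, mul_one]
    · rintro ⟨-, h1, h2⟩; exact ⟨h1, h2⟩
  rw [hset, Set.ncard_coe_finset]
  -- split Q into Q1 (many positive-b pairs) and Q2
  set Q1 := Qf.filter (fun z => τ / 2 ≤ (lcnt Pp z : ℝ)) with hQ1
  set Q2 := Qf.filter (fun z => ¬ (τ / 2 ≤ (lcnt Pp z : ℝ))) with hQ2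
  have hQsum : Q1.card + Q2.card = Qf.card := Finset.card_filter_add_card_filter_not _
  -- sumset cardinality bounds
  have hPpsub : Pp + Pp ⊆ (A + A) ×ˢ (A + A) := by
    intro s hs
    rw [Finset.mem_add] at hs
    obtain ⟨p, hp, q, hq, rfl⟩ := hs
    rw [hPp, Finset.mem_product] at hp hq
    simp only [Finset.mem_product, Prod.fst_add, Prod.snd_add]
    exact ⟨Finset.add_mem_add (hA'A hp.1) (hA'A hq.1),
      Finset.add_mem_add (hA'A (Finset.filter_subset _ _ hp.2))
        (hA'A (Finset.filter_subset _ _ hq.2))⟩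
  have hPpK : ((Pp + Pp).card : ℝ) ≤ K ^ 2 := by
    have h1 : (Pp + Pp).card ≤ ((A + A) ×ˢ (A + A)).card := Finset.card_le_card hPpsub
    rw [Finset.card_product] at h1
    rw [hK, sq]
    exact_mod_cast h1
  have hPmsub : Pm + Pm ⊆ (A + A) ×ˢ ((A + A).image Neg.neg) := by
    intro s hs
    rw [Finset.mem_add] at hs
    obtain ⟨p, hp, q, hq, rfl⟩ := hs
    rw [hPmdef, Finset.mem_image] at hp hq
    obtain ⟨p', hp', rfl⟩ := hp
    obtain ⟨q', hq', rfl⟩ := hq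
    rw [Finset.mem_product] at hp' hq'
    simp only [Finset.mem_product, Prod.fst_add, Prod.snd_add]
    refine ⟨Finset.add_mem_add (hA'A hp'.1) (hA'A hq'.1), ?_⟩
    rw [Finset.mem_image]
    refine ⟨p'.2 + q'.2, Finset.add_mem_add (hA'A (Finset.filter_subset _ _ hp'.2))
      (hA'A (Finset.filter_subset _ _ hq'.2)), by ring⟩
  have hPmK : ((Pm + Pm).card : ℝ) ≤ K ^ 2 := by
    have h1 : (Pm + Pm).card ≤ ((A + A) ×ˢ ((A + A).image Neg.neg)).card :=
      Finset.card_le_card hPmsub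
    rw [Finset.card_product] at h1
    have h2 : ((A + A).image Neg.neg).card ≤ (A + A).card := Finset.card_image_le
    have h3 : (Pm + Pm).card ≤ (A + A).card * (A + A).card :=
      h1.trans (Nat.mul_le_mul_left _ h2)
    rw [hK, sq]
    exact_mod_cast h3
  -- counting bounds on individual lines
  have hlcntPp : ∀ z, (lcnt Pp z : ℝ) ≤ K := by
    intro z
    have h1 : Pp.image Prod.snd ⊆ Apos := by
      intro b hb
      rw [Finset.mem_image] at hb
      obtain ⟨p, hp, rfl⟩ := hb
      exact (Finset.mem_product.mp hp).2
    have h2 : lcnt Pp z ≤ A.card :=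
      (lcnt_le_image_snd Pp z).trans ((Finset.card_le_card h1).trans
        (Finset.card_le_card ((Finset.filter_subset _ _).trans hA'A)))
    exact le_trans (by exact_mod_cast h2) hAK
  have hlcntPm : ∀ w, (lcnt Pm w : ℝ) ≤ K := by
    intro w
    have h1 : Pm.image Prod.snd ⊆ Aneg.image Neg.neg := by
      intro b hb
      rw [Finset.mem_image] at hb
      obtain ⟨p, hp, rfl⟩ := hb
      rw [hPmdef, Finset.mem_image] at hp
      obtain ⟨p', hp', rfl⟩ := hp
      exact Finset.mem_image_of_mem _ (Finset.mem_product.mp hp').2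
    have h2 : lcnt Pm w ≤ A.card :=
      (lcnt_le_image_snd Pm w).trans ((Finset.card_le_card h1).trans
        (Finset.card_image_le.trans
          (Finset.card_le_card ((Finset.filter_subset _ _).trans hA'A))))
    exact le_trans (by exact_mod_cast h2) hAK
  -- bound Q1
  have hQ1b : (Q1.card : ℝ) * τ ^ 2 ≤ 8 * K ^ 2 := by
    rcases Q1.eq_empty_or_nonempty with he | ⟨z0, hz0⟩
    · rw [he]
      simp only [Finset.card_empty, Nat.cast_zero, zero_mul]
      positivity
    · have hz0' : τ / 2 ≤ (lcnt Pp z0 : ℝ) := (Finset.mem_filter.mp hz0).2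
      have hτK : τ / 2 ≤ K := le_trans hz0' (hlcntPp z0)
      have hsol := solymosi Pp hPppos (τ / 2) (by linarith) Q1
        (fun z hz => (Finset.mem_filter.mp hz).2)
      have h := hsol.trans hPpK
      nlinarith [h, mul_self_le_mul_self (by linarith : (0:ℝ) ≤ τ / 2) hτK]
  -- bound Q2
  have hq2 : ∀ w ∈ Q2.image Neg.neg, τ / 2 ≤ (lcnt Pm w : ℝ) := by
    intro w hw
    rw [Finset.mem_image] at hw
    obtain ⟨z, hz, rfl⟩ := hw
    have hzQ := Finset.mem_filter.mp hz
    have h1 : τ ≤ (qfun A z : ℝ) := (Finset.mem_filter.mp hzQ.1).2.1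
    have h2 : ¬ (τ / 2 ≤ (lcnt Pp z : ℝ)) := hzQ.2
    push_neg at h2
    have h3 : (qfun A z : ℝ) = (lcnt Pp z : ℝ) + (lcnt (A' ×ˢ Aneg) z : ℝ) := by
      exact_mod_cast congrArg (Nat.cast (R := ℝ)) (hsplit z)
    rw [hneg z] at h3
    linarith
  have hQ2b : (Q2.card : ℝ) * τ ^ 2 ≤ 8 * K ^ 2 := by
    rcases Q2.eq_empty_or_nonempty with he | ⟨z0, hz0⟩
    · rw [he]
      simp only [Finset.card_empty, Nat.cast_zero, zero_mul]
      positivity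
    · have hw0 : -z0 ∈ Q2.image Neg.neg := Finset.mem_image_of_mem _ hz0
      have hτK : τ / 2 ≤ K := le_trans (hq2 _ hw0) (hlcntPm _)
      have hsol := solymosi Pm hPmpos (τ / 2) (by linarith) (Q2.image Neg.neg) hq2
      rw [Finset.card_image_of_injective _ neg_injective] at hsol
      have h := hsol.trans hPmK
      nlinarith [h, mul_self_le_mul_self (by linarith : (0:ℝ) ≤ τ / 2) hτK]
  -- finish
  have hcards : (Qf.card : ℝ) = (Q1.card : ℝ) + (Q2.card : ℝ) := by exact_mod_cast hQsum.symm
  rw [le_div_iff₀ (by positivity : (0:ℝ) < τ ^ 2)]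
  nlinarith [hQ1b, hQ2b, hcards]
end

section
/- There is an absolute constant C > 0 such that every finite nonempty set A ⊆ ℝ satisfies T(A) ≤ C·(|A|^5 + |A|^3·E(A)). -/
open Finset

/-- `T(A)`: the number of ordered pairs of commuting `2×2` real matrices with all entries
in `A`, counted as 8-tuples of entries. -/
noncomputable def Tset (A : Finset ℝ) : ℕ :=
  (((A ×ˢ A ×ˢ A ×ˢ A) ×ˢ (A ×ˢ A ×ˢ A ×ˢ A)).filter
    (fun p => !![p.1.1, p.1.2.1; p.1.2.2.1, p.1.2.2.2] *
        !![p.2.1, p.2.2.1; p.2.2.2.1, p.2.2.2.2] =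
      !![p.2.1, p.2.2.1; p.2.2.2.1, p.2.2.2.2] *
        !![p.1.1, p.1.2.1; p.1.2.2.1, p.1.2.2.2])).card

/-- `E(A)`: the number of quadruples `(a1,a2,a3,a4) ∈ A⁴` with `a1 + a2 = a3 + a4`. -/
noncomputable def Eset (A : Finset ℝ) : ℕ :=
  (((A ×ˢ A) ×ˢ (A ×ˢ A)).filter
    (fun p => p.1.1 + p.1.2 = p.2.1 + p.2.2)).card

lemma cond_iff (a b c d e f g h : ℝ) :
    (!![a,b;c,d] * !![e,f;g,h] = !![e,f;g,h] * !![a,b;c,d]) ↔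
    (b*g = c*f ∧ f*(a-d) = b*(e-h) ∧ c*(e-h) = g*(a-d)) := by
  rw [Matrix.mul_fin_two, Matrix.mul_fin_two, ← Matrix.ext_iff]
  simp [Fin.forall_fin_two]
  constructor
  · rintro ⟨⟨h1, h2⟩, h3, h4⟩
    refine ⟨by linarith, by nlinarith, by nlinarith⟩
  · rintro ⟨h1, h2, h3⟩
    refine ⟨⟨by nlinarith, by nlinarith⟩, by nlinarith, by nlinarith⟩

/-- The solution set written with polynomial conditions. -/
noncomputable def SS (A : Finset ℝ) : Finset ((ℝ×ℝ×ℝ×ℝ)×(ℝ×ℝ×ℝ×ℝ)) :=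
  ((A ×ˢ A ×ˢ A ×ˢ A) ×ˢ (A ×ˢ A ×ˢ A ×ˢ A)).filter
    (fun p => p.1.2.1 * p.2.2.2.1 = p.1.2.2.1 * p.2.2.1 ∧
      p.2.2.1 * (p.1.1 - p.1.2.2.2) = p.1.2.1 * (p.2.1 - p.2.2.2.2) ∧
      p.1.2.2.1 * (p.2.1 - p.2.2.2.2) = p.2.2.2.1 * (p.1.1 - p.1.2.2.2))

lemma Tset_eq (A : Finset ℝ) : Tset A = (SS A).card := by
  rw [Tset, SS]
  congr 1
  apply Finset.filter_congr
  rintro ⟨⟨a,b,c,d⟩,e,f,g,h⟩ _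
  simpa using cond_iff a b c d e f g h

lemma key_lemma (A : Finset ℝ) (u v : ℝ) (hu : u ≠ 0) (hv : v ≠ 0) :
    (((A ×ˢ A) ×ˢ (A ×ˢ A)).filter
      (fun p => u * (p.1.1 - p.1.2) = v * (p.2.1 - p.2.2))).card ≤ Eset A := by
  classical
  set D : Finset ℝ := (A ×ˢ A).image (fun p => p.1 - p.2) with hD
  set r : ℝ → ℕ := fun s => ((A ×ˢ A).filter (fun p => p.1 - p.2 = s)).card with hr
  have hrzero : ∀ s : ℝ, s ∉ D → r s = 0 := by
    intro s hs
    rw [hr]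
    simp only [Finset.card_eq_zero, Finset.filter_eq_empty_iff]
    intro p hp hps
    exact hs (Finset.mem_image.mpr ⟨p, hp, hps⟩)
  have hE : Eset A = ∑ s ∈ D, (r s)^2 := by
    rw [Eset, Finset.card_eq_sum_card_fiberwise (f := fun p => p.1.1 - p.2.1) (t := D)
      (fun p hp => by
        simp only [Finset.mem_coe, Finset.mem_filter, Finset.mem_product] at hp
        exact Finset.mem_image.mpr ⟨(p.1.1, p.2.1),
          Finset.mem_product.mpr ⟨hp.1.1.1, hp.1.2.1⟩, rfl⟩)]
    refine Finset.sum_congr rfl fun s hs => ?_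
    rw [sq, hr, ← Finset.card_product, Finset.filter_filter]
    apply Finset.card_nbij' (fun p => ((p.1.1, p.2.1), (p.2.2, p.1.2)))
      (fun q => ((q.1.1, q.2.2), (q.1.2, q.2.1)))
    · rintro ⟨⟨a1, a2⟩, a3, a4⟩ hp
      simp only [Finset.mem_coe, Finset.mem_filter, Finset.mem_product] at hp ⊢
      obtain ⟨⟨⟨h1, h2⟩, h3, h4⟩, h5, h6⟩ := hp
      exact ⟨⟨⟨h1, h3⟩, h6⟩, ⟨h4, h2⟩, by linarith⟩
    · rintro ⟨⟨x1, x2⟩, y1, y2⟩ hq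
      simp only [Finset.mem_coe, Finset.mem_filter, Finset.mem_product] at hq ⊢
      obtain ⟨⟨⟨h1, h2⟩, h3⟩, ⟨h4, h5⟩, h6⟩ := hq
      exact ⟨⟨⟨h1, h5⟩, h2, h4⟩, by linarith, h3⟩
    · rintro ⟨⟨a1, a2⟩, a3, a4⟩ _; rfl
    · rintro ⟨⟨x1, x2⟩, y1, y2⟩ _; rfl
  set w := v / u with hwdef
  have hw : w ≠ 0 := div_ne_zero hv hu
  set Q := (((A ×ˢ A) ×ˢ (A ×ˢ A)).filter
      (fun p => u * (p.1.1 - p.1.2) = v * (p.2.1 - p.2.2))) with hQdef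
  have hQ : Q.card = ∑ t ∈ D, r (w * t) * r t := by
    rw [hQdef, Finset.card_eq_sum_card_fiberwise (f := fun p => p.2.1 - p.2.2) (t := D)
      (fun p hp => by
        simp only [Finset.mem_coe, Finset.mem_filter, Finset.mem_product] at hp
        exact Finset.mem_image.mpr ⟨(p.2.1, p.2.2),
          Finset.mem_product.mpr ⟨hp.1.2.1, hp.1.2.2⟩, rfl⟩)]
    refine Finset.sum_congr rfl fun t ht => ?_
    rw [Finset.filter_filter, hr, ← Finset.card_product]
    congr 1
    ext ⟨⟨a, d⟩, e, h⟩
    simp only [Finset.mem_coe, Finset.mem_filter, Finset.mem_product]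
    constructor
    · rintro ⟨⟨⟨h1, h2⟩, h3, h4⟩, h5, h6⟩
      refine ⟨⟨⟨h1, h2⟩, ?_⟩, ⟨h3, h4⟩, h6⟩
      rw [hwdef]
      field_simp
      rw [h6] at h5
      linarith
    · rintro ⟨⟨⟨h1, h2⟩, h5⟩, ⟨h3, h4⟩, h6⟩
      refine ⟨⟨⟨h1, h2⟩, h3, h4⟩, ?_, h6⟩
      rw [h5, h6, hwdef]
      field_simp
  have h2 : 2 * Q.card ≤ (∑ t ∈ D, (r (w * t))^2) + ∑ t ∈ D, (r t)^2 := by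
    rw [hQ, Finset.mul_sum, ← Finset.sum_add_distrib]
    refine Finset.sum_le_sum fun t _ => ?_
    have := two_mul_le_add_sq (r (w * t)) (r t)
    linarith [this]
  have h3 : (∑ t ∈ D, (r (w * t))^2) ≤ ∑ s ∈ D, (r s)^2 := by
    have himg : ∑ t ∈ D, (r (w * t))^2
        = ∑ s ∈ D.image (fun t => w * t), (r s)^2 :=
      (Finset.sum_image (s := D) (g := fun t => w * t) (f := fun s => (r s : ℕ)^2)
        (fun x _ y _ hxy => mul_left_cancel₀ hw hxy)).symm
    rw [himg]
    refine Finset.sum_le_sum_of_ne_zero fun s hs hne => ?_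
    by_contra hsD
    exact hne (by rw [hrzero s hsD]; norm_num)
  omega

lemma cardA5 (A : Finset ℝ) : (A ×ˢ A ×ˢ A ×ˢ A ×ˢ A).card = A.card^5 := by
  simp [Finset.card_product]; ring

lemma cardA4 (A : Finset ℝ) : (A ×ˢ A ×ˢ A ×ˢ A).card = A.card^4 := by
  simp [Finset.card_product]; ring

-- case 1: a = d, e = h
lemma bound1 (A : Finset ℝ) :
    ((SS A).filter (fun p => p.1.1 = p.1.2.2.2 ∧ p.2.1 = p.2.2.2.2)).card
      ≤ A.card^5 + A.card^4 + A.card^4 := by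
  classical
  set T := (SS A).filter (fun p => p.1.1 = p.1.2.2.2 ∧ p.2.1 = p.2.2.2.2) with hT
  have hcov : T ⊆ (T.filter (fun p => p.1.2.1 ≠ 0)) ∪
      (T.filter (fun p => p.1.2.1 = 0 ∧ p.1.2.2.1 = 0)) ∪
      (T.filter (fun p => p.1.2.1 = 0 ∧ p.1.2.2.1 ≠ 0)) := by
    intro p hp
    simp only [Finset.mem_union, Finset.mem_filter, hp, true_and]
    tauto
  refine le_trans (Finset.card_le_card hcov) (le_trans (Finset.card_union_le _ _) ?_)
  refine le_trans (Nat.add_le_add_right (Finset.card_union_le _ _) _) ?_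
  have h1 : (T.filter (fun p => p.1.2.1 ≠ 0)).card ≤ A.card^5 := by
    rw [← cardA5 A]
    apply Finset.card_le_card_of_injOn
      (fun p => (p.1.1, p.1.2.1, p.1.2.2.1, p.2.1, p.2.2.1))
    · rintro ⟨⟨a,b,c,d⟩,e,f,g,h⟩ hp
      simp only [Finset.mem_coe, hT, SS, Finset.mem_filter, Finset.mem_product] at hp
      simp only [Finset.mem_coe, Finset.mem_product]
      exact ⟨hp.1.1.1.1.1, hp.1.1.1.1.2.1, hp.1.1.1.1.2.2.1, hp.1.1.1.2.1, hp.1.1.1.2.2.1⟩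
    · rintro ⟨⟨a,b,c,d⟩,e,f,g,h⟩ hp ⟨⟨a',b',c',d'⟩,e',f',g',h'⟩ hq hpq
      simp only [Finset.mem_coe, hT, SS, Finset.mem_filter, Finset.mem_product] at hp hq
      simp only [Prod.mk.injEq] at hpq
      obtain ⟨rfl, rfl, rfl, rfl, rfl⟩ := hpq
      obtain ⟨⟨⟨_, heq1, _, _⟩, had, haeh⟩, hb⟩ := hp
      obtain ⟨⟨⟨_, heq1', _, _⟩, had', haeh'⟩, _⟩ := hq
      have hg : g = g' := by
        apply mul_left_cancel₀ hb
        rw [heq1, heq1']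
      have hd : d = d' := by rw [← had, ← had']
      have hh : h = h' := by rw [← haeh, ← haeh']
      subst hg; subst hd; subst hh; rfl
  have h2 : (T.filter (fun p => p.1.2.1 = 0 ∧ p.1.2.2.1 = 0)).card ≤ A.card^4 := by
    rw [← cardA4 A]
    apply Finset.card_le_card_of_injOn
      (fun p => (p.1.1, p.2.1, p.2.2.1, p.2.2.2.1))
    · rintro ⟨⟨a,b,c,d⟩,e,f,g,h⟩ hp
      simp only [Finset.mem_coe, hT, SS, Finset.mem_filter, Finset.mem_product] at hp
      simp only [Finset.mem_coe, Finset.mem_product]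
      exact ⟨hp.1.1.1.1.1, hp.1.1.1.2.1, hp.1.1.1.2.2.1, hp.1.1.1.2.2.2.1⟩
    · rintro ⟨⟨a,b,c,d⟩,e,f,g,h⟩ hp ⟨⟨a',b',c',d'⟩,e',f',g',h'⟩ hq hpq
      simp only [Finset.mem_coe, hT, SS, Finset.mem_filter, Finset.mem_product] at hp hq
      simp only [Prod.mk.injEq] at hpq
      obtain ⟨rfl, rfl, rfl, rfl⟩ := hpq
      obtain ⟨⟨_, had, haeh⟩, hb, hc⟩ := hp
      obtain ⟨⟨_, had', haeh'⟩, hb', hc'⟩ := hq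
      have hd : d = d' := by rw [← had, ← had']
      have hh : h = h' := by rw [← haeh, ← haeh']
      have hbb : b = b' := by rw [hb, hb']
      have hcc : c = c' := by rw [hc, hc']
      subst hd; subst hh; subst hbb; subst hcc; rfl
  have h3 : (T.filter (fun p => p.1.2.1 = 0 ∧ p.1.2.2.1 ≠ 0)).card ≤ A.card^4 := by
    rw [← cardA4 A]
    apply Finset.card_le_card_of_injOn
      (fun p => (p.1.1, p.1.2.2.1, p.2.1, p.2.2.2.1))
    · rintro ⟨⟨a,b,c,d⟩,e,f,g,h⟩ hp
      simp only [Finset.mem_coe, hT, SS, Finset.mem_filter, Finset.mem_product] at hp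
      simp only [Finset.mem_coe, Finset.mem_product]
      exact ⟨hp.1.1.1.1.1, hp.1.1.1.1.2.2.1, hp.1.1.1.2.1, hp.1.1.1.2.2.2.1⟩
    · rintro ⟨⟨a,b,c,d⟩,e,f,g,h⟩ hp ⟨⟨a',b',c',d'⟩,e',f',g',h'⟩ hq hpq
      simp only [Finset.mem_coe, hT, SS, Finset.mem_filter, Finset.mem_product] at hp hq
      simp only [Prod.mk.injEq] at hpq
      obtain ⟨rfl, rfl, rfl, rfl⟩ := hpq
      obtain ⟨⟨⟨_, heq1, _, _⟩, had, haeh⟩, hb, hc⟩ := hp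
      obtain ⟨⟨⟨_, heq1', _, _⟩, had', haeh'⟩, hb', hc'⟩ := hq
      have hf : f = 0 := by
        have h0 : c * f = 0 := by rw [← heq1, hb, zero_mul]
        rcases mul_eq_zero.mp h0 with hz | hz
        · exact absurd hz hc
        · exact hz
      have hf' : f' = 0 := by
        have h0 : c * f' = 0 := by rw [← heq1', hb', zero_mul]
        rcases mul_eq_zero.mp h0 with hz | hz
        · exact absurd hz hc
        · exact hz
      have hd : d = d' := by rw [← had, ← had']
      have hh : h = h' := by rw [← haeh, ← haeh']
      have hbb : b = b' := by rw [hb, hb']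
      have hff : f = f' := by rw [hf, hf']
      subst hd; subst hh; subst hbb; subst hff; rfl
  linarith

-- case 2: a = d, e ≠ h  (then b = 0, c = 0)
lemma bound2 (A : Finset ℝ) :
    ((SS A).filter (fun p => p.1.1 = p.1.2.2.2 ∧ p.2.1 ≠ p.2.2.2.2)).card ≤ A.card^5 := by
  classical
  rw [← cardA5 A]
  apply Finset.card_le_card_of_injOn
    (fun p => (p.1.1, p.2.1, p.2.2.1, p.2.2.2.1, p.2.2.2.2))
  · rintro ⟨⟨a,b,c,d⟩,e,f,g,h⟩ hp
    simp only [Finset.mem_coe, SS, Finset.mem_filter, Finset.mem_product] at hp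
    simp only [Finset.mem_coe, Finset.mem_product]
    exact ⟨hp.1.1.1.1, hp.1.1.2.1, hp.1.1.2.2.1, hp.1.1.2.2.2.1, hp.1.1.2.2.2.2⟩
  · rintro ⟨⟨a,b,c,d⟩,e,f,g,h⟩ hp ⟨⟨a',b',c',d'⟩,e',f',g',h'⟩ hq hpq
    simp only [Finset.mem_coe, SS, Finset.mem_filter, Finset.mem_product] at hp hq
    simp only [Prod.mk.injEq] at hpq
    obtain ⟨rfl, rfl, rfl, rfl, rfl⟩ := hpq
    obtain ⟨⟨_, heq1, heq2, heq3⟩, had, heh⟩ := hp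
    obtain ⟨⟨_, heq1', heq2', heq3'⟩, had', heh'⟩ := hq
    have hd : d = d' := by rw [← had, ← had']
    subst hd
    have hb : b = 0 := by
      have h0 : b * (e - h) = 0 := by rw [← heq2, ← had, sub_self, mul_zero]
      rcases mul_eq_zero.mp h0 with hz | hz
      · exact hz
      · exact absurd (by linarith [hz] : e = h) heh
    have hb' : b' = 0 := by
      have h0 : b' * (e - h) = 0 := by rw [← heq2', ← had', sub_self, mul_zero]
      rcases mul_eq_zero.mp h0 with hz | hz
      · exact hz
      · exact absurd (by linarith [hz] : e = h) heh
    have hc : c = 0 := by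
      have h0 : c * (e - h) = 0 := by rw [heq3, ← had, sub_self, mul_zero]
      rcases mul_eq_zero.mp h0 with hz | hz
      · exact hz
      · exact absurd (by linarith [hz] : e = h) heh
    have hc' : c' = 0 := by
      have h0 : c' * (e - h) = 0 := by rw [heq3', ← had', sub_self, mul_zero]
      rcases mul_eq_zero.mp h0 with hz | hz
      · exact hz
      · exact absurd (by linarith [hz] : e = h) heh
    have hbb : b = b' := by rw [hb, hb']
    have hcc : c = c' := by rw [hc, hc']
    subst hbb; subst hcc; rfl

-- case 3: a ≠ d, e = h  (then f = 0, g = 0)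
lemma bound3 (A : Finset ℝ) :
    ((SS A).filter (fun p => p.1.1 ≠ p.1.2.2.2 ∧ p.2.1 = p.2.2.2.2)).card ≤ A.card^5 := by
  classical
  rw [← cardA5 A]
  apply Finset.card_le_card_of_injOn
    (fun p => (p.1.1, p.1.2.1, p.1.2.2.1, p.1.2.2.2, p.2.1))
  · rintro ⟨⟨a,b,c,d⟩,e,f,g,h⟩ hp
    simp only [Finset.mem_coe, SS, Finset.mem_filter, Finset.mem_product] at hp
    simp only [Finset.mem_coe, Finset.mem_product]
    exact ⟨hp.1.1.1.1, hp.1.1.1.2.1, hp.1.1.1.2.2.1, hp.1.1.1.2.2.2, hp.1.1.2.1⟩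
  · rintro ⟨⟨a,b,c,d⟩,e,f,g,h⟩ hp ⟨⟨a',b',c',d'⟩,e',f',g',h'⟩ hq hpq
    simp only [Finset.mem_coe, SS, Finset.mem_filter, Finset.mem_product] at hp hq
    simp only [Prod.mk.injEq] at hpq
    obtain ⟨rfl, rfl, rfl, rfl, rfl⟩ := hpq
    obtain ⟨⟨_, heq1, heq2, heq3⟩, had, heh⟩ := hp
    obtain ⟨⟨_, heq1', heq2', heq3'⟩, had', heh'⟩ := hq
    have hh : h = h' := by rw [← heh, ← heh']
    subst hh
    have hf : f = 0 := by
      have h0 : f * (a - d) = 0 := by rw [heq2, ← heh, sub_self, mul_zero]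
      rcases mul_eq_zero.mp h0 with hz | hz
      · exact hz
      · exact absurd (by linarith [hz] : a = d) had
    have hf' : f' = 0 := by
      have h0 : f' * (a - d) = 0 := by rw [heq2', ← heh', sub_self, mul_zero]
      rcases mul_eq_zero.mp h0 with hz | hz
      · exact hz
      · exact absurd (by linarith [hz] : a = d) had
    have hg : g = 0 := by
      have h0 : g * (a - d) = 0 := by rw [← heq3, ← heh, sub_self, mul_zero]
      rcases mul_eq_zero.mp h0 with hz | hz
      · exact hz
      · exact absurd (by linarith [hz] : a = d) had
    have hg' : g' = 0 := by
      have h0 : g' * (a - d) = 0 := by rw [← heq3', ← heh', sub_self, mul_zero]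
      rcases mul_eq_zero.mp h0 with hz | hz
      · exact hz
      · exact absurd (by linarith [hz] : a = d) had
    have hff : f = f' := by rw [hf, hf']
    have hgg : g = g' := by rw [hg, hg']
    subst hff; subst hgg; rfl

-- case 4: a ≠ d, e ≠ h, b = 0, c = 0  (then f = 0, g = 0)
lemma bound4 (A : Finset ℝ) :
    ((SS A).filter (fun p => p.1.1 ≠ p.1.2.2.2 ∧ p.2.1 ≠ p.2.2.2.2 ∧
      p.1.2.1 = 0 ∧ p.1.2.2.1 = 0)).card ≤ A.card^4 := by
  classical
  rw [← cardA4 A]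
  apply Finset.card_le_card_of_injOn
    (fun p => (p.1.1, p.1.2.2.2, p.2.1, p.2.2.2.2))
  · rintro ⟨⟨a,b,c,d⟩,e,f,g,h⟩ hp
    simp only [Finset.mem_coe, SS, Finset.mem_filter, Finset.mem_product] at hp
    simp only [Finset.mem_coe, Finset.mem_product]
    exact ⟨hp.1.1.1.1, hp.1.1.1.2.2.2, hp.1.1.2.1, hp.1.1.2.2.2.2⟩
  · rintro ⟨⟨a,b,c,d⟩,e,f,g,h⟩ hp ⟨⟨a',b',c',d'⟩,e',f',g',h'⟩ hq hpq
    simp only [Finset.mem_coe, SS, Finset.mem_filter, Finset.mem_product] at hp hq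
    simp only [Prod.mk.injEq] at hpq
    obtain ⟨rfl, rfl, rfl, rfl⟩ := hpq
    obtain ⟨⟨_, heq1, heq2, heq3⟩, had, heh, hb, hc⟩ := hp
    obtain ⟨⟨_, heq1', heq2', heq3'⟩, had', heh', hb', hc'⟩ := hq
    have hf : f = 0 := by
      have h0 : f * (a - d) = 0 := by rw [heq2, hb, zero_mul]
      rcases mul_eq_zero.mp h0 with hz | hz
      · exact hz
      · exact absurd (by linarith [hz] : a = d) had
    have hf' : f' = 0 := by
      have h0 : f' * (a - d) = 0 := by rw [heq2', hb', zero_mul]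
      rcases mul_eq_zero.mp h0 with hz | hz
      · exact hz
      · exact absurd (by linarith [hz] : a = d) had
    have hg : g = 0 := by
      have h0 : g * (a - d) = 0 := by rw [← heq3, hc, zero_mul]
      rcases mul_eq_zero.mp h0 with hz | hz
      · exact hz
      · exact absurd (by linarith [hz] : a = d) had
    have hg' : g' = 0 := by
      have h0 : g' * (a - d) = 0 := by rw [← heq3', hc', zero_mul]
      rcases mul_eq_zero.mp h0 with hz | hz
      · exact hz
      · exact absurd (by linarith [hz] : a = d) had
    have hbb : b = b' := by rw [hb, hb']
    have hcc : c = c' := by rw [hc, hc']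
    have hff : f = f' := by rw [hf, hf']
    have hgg : g = g' := by rw [hg, hg']
    subst hbb; subst hcc; subst hff; subst hgg; rfl

-- case 5: a ≠ d, e ≠ h, b = 0, c ≠ 0
lemma bound5 (A : Finset ℝ) :
    ((SS A).filter (fun p => p.1.1 ≠ p.1.2.2.2 ∧ p.2.1 ≠ p.2.2.2.2 ∧
      p.1.2.1 = 0 ∧ p.1.2.2.1 ≠ 0)).card ≤ Eset A * A.card^2 := by
  classical
  have hcard : ((A ×ˢ A).filter (fun q => q.1 ≠ 0 ∧ q.2 ≠ 0)).card ≤ A.card^2 := by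
    refine le_trans (Finset.card_filter_le _ _) ?_
    simp [Finset.card_product, sq]
  refine le_trans (Finset.card_le_mul_card_image_of_maps_to
    (f := fun p => (p.1.2.2.1, p.2.2.2.1))
    (t := (A ×ˢ A).filter (fun q => q.1 ≠ 0 ∧ q.2 ≠ 0)) ?_ (Eset A) ?_)
    (Nat.mul_le_mul_left _ hcard)
  · rintro ⟨⟨a,b,c,d⟩,e,f,g,h⟩ hp
    simp only [Finset.mem_coe, SS, Finset.mem_filter, Finset.mem_product] at hp
    obtain ⟨⟨⟨hmem1, hmem2⟩, heq1, heq2, heq3⟩, had, heh, hb, hc⟩ := hp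
    have hg : g ≠ 0 := by
      intro hg0
      have h0 : c * (e - h) = 0 := by rw [heq3, hg0, zero_mul]
      rcases mul_eq_zero.mp h0 with hz | hz
      · exact hc hz
      · exact heh (by linarith)
    simp only [Finset.mem_coe, Finset.mem_filter, Finset.mem_product]
    exact ⟨⟨hmem1.2.2.1, hmem2.2.2.1⟩, hc, hg⟩
  · rintro ⟨c0, g0⟩ hq
    simp only [Finset.mem_coe, Finset.mem_filter, Finset.mem_product] at hq
    obtain ⟨⟨hc0A, hg0A⟩, hc0, hg0⟩ := hq
    refine le_trans (Finset.card_le_card_of_injOn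
      (fun p => ((p.1.1, p.1.2.2.2), (p.2.1, p.2.2.2.2))) ?_ ?_)
      (key_lemma A g0 c0 hg0 hc0)
    · rintro ⟨⟨a,b,c,d⟩,e,f,g,h⟩ hp
      simp only [Finset.mem_coe, SS, Finset.mem_filter, Finset.mem_product, Prod.mk.injEq] at hp
      obtain ⟨⟨⟨⟨hmem1, hmem2⟩, heq1, heq2, heq3⟩, had, heh, hb, hc⟩, hcc0, hgg0⟩ := hp
      simp only [Finset.mem_coe, Finset.mem_filter, Finset.mem_product]
      refine ⟨⟨⟨hmem1.1, hmem1.2.2.2⟩, hmem2.1, hmem2.2.2.2⟩, ?_⟩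
      rw [← hcc0, ← hgg0]
      linarith [heq3]
    · rintro ⟨⟨a,b,c,d⟩,e,f,g,h⟩ hp ⟨⟨a',b',c',d'⟩,e',f',g',h'⟩ hq' hpq
      simp only [Finset.mem_coe, SS, Finset.mem_filter, Finset.mem_product,
        Prod.mk.injEq] at hp hq'
      simp only [Prod.mk.injEq] at hpq
      obtain ⟨⟨rfl, rfl⟩, rfl, rfl⟩ := hpq
      obtain ⟨⟨⟨_, heq1, heq2, heq3⟩, had, heh, hb, hc⟩, hcc0, hgg0⟩ := hp
      obtain ⟨⟨⟨_, heq1', heq2', heq3'⟩, had', heh', hb', hc'⟩, hcc0', hgg0'⟩ := hq'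
      have hf : f = 0 := by
        have h0 : f * (a - d) = 0 := by rw [heq2, hb, zero_mul]
        rcases mul_eq_zero.mp h0 with hz | hz
        · exact hz
        · exact absurd (by linarith [hz] : a = d) had
      have hf' : f' = 0 := by
        have h0 : f' * (a - d) = 0 := by rw [heq2', hb', zero_mul]
        rcases mul_eq_zero.mp h0 with hz | hz
        · exact hz
        · exact absurd (by linarith [hz] : a = d) had
      have hbb : b = b' := by rw [hb, hb']
      have hcc : c = c' := by rw [hcc0, hcc0']
      have hff : f = f' := by rw [hf, hf']
      have hgg : g = g' := by rw [hgg0, hgg0']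
      subst hbb; subst hcc; subst hff; subst hgg; rfl

-- case 6: a ≠ d, e ≠ h, b ≠ 0
lemma bound6 (A : Finset ℝ) :
    ((SS A).filter (fun p => p.1.1 ≠ p.1.2.2.2 ∧ p.2.1 ≠ p.2.2.2.2 ∧
      p.1.2.1 ≠ 0)).card ≤ Eset A * A.card^3 := by
  classical
  have hcard : ((A ×ˢ A ×ˢ A).filter (fun q => q.1 ≠ 0 ∧ q.2.2 ≠ 0)).card ≤ A.card^3 := by
    refine le_trans (Finset.card_filter_le _ _) ?_
    simp [Finset.card_product]; ring_nf; simp [pow_succ, pow_zero, mul_assoc]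
  refine le_trans (Finset.card_le_mul_card_image_of_maps_to
    (f := fun p => (p.1.2.1, p.1.2.2.1, p.2.2.1))
    (t := (A ×ˢ A ×ˢ A).filter (fun q => q.1 ≠ 0 ∧ q.2.2 ≠ 0)) ?_ (Eset A) ?_)
    (Nat.mul_le_mul_left _ hcard)
  · rintro ⟨⟨a,b,c,d⟩,e,f,g,h⟩ hp
    simp only [Finset.mem_coe, SS, Finset.mem_filter, Finset.mem_product] at hp
    obtain ⟨⟨⟨hmem1, hmem2⟩, heq1, heq2, heq3⟩, had, heh, hb⟩ := hp
    have hf : f ≠ 0 := by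
      intro hf0
      have h0 : b * (e - h) = 0 := by rw [← heq2, hf0, zero_mul]
      rcases mul_eq_zero.mp h0 with hz | hz
      · exact hb hz
      · exact heh (by linarith)
    simp only [Finset.mem_coe, Finset.mem_filter, Finset.mem_product]
    exact ⟨⟨hmem1.2.1, hmem1.2.2.1, hmem2.2.1⟩, hb, hf⟩
  · rintro ⟨b0, c0, f0⟩ hq
    simp only [Finset.mem_coe, Finset.mem_filter, Finset.mem_product] at hq
    obtain ⟨⟨hb0A, hc0A, hf0A⟩, hb0, hf0⟩ := hq
    refine le_trans (Finset.card_le_card_of_injOn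
      (fun p => ((p.1.1, p.1.2.2.2), (p.2.1, p.2.2.2.2))) ?_ ?_)
      (key_lemma A f0 b0 hf0 hb0)
    · rintro ⟨⟨a,b,c,d⟩,e,f,g,h⟩ hp
      simp only [Finset.mem_coe, SS, Finset.mem_filter, Finset.mem_product, Prod.mk.injEq] at hp
      obtain ⟨⟨⟨⟨hmem1, hmem2⟩, heq1, heq2, heq3⟩, had, heh, hb⟩, hbb0, hcc0, hff0⟩ := hp
      simp only [Finset.mem_coe, Finset.mem_filter, Finset.mem_product]
      refine ⟨⟨⟨hmem1.1, hmem1.2.2.2⟩, hmem2.1, hmem2.2.2.2⟩, ?_⟩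
      rw [← hbb0, ← hff0]
      linarith [heq2]
    · rintro ⟨⟨a,b,c,d⟩,e,f,g,h⟩ hp ⟨⟨a',b',c',d'⟩,e',f',g',h'⟩ hq' hpq
      simp only [Finset.mem_coe, SS, Finset.mem_filter, Finset.mem_product,
        Prod.mk.injEq] at hp hq'
      simp only [Prod.mk.injEq] at hpq
      obtain ⟨⟨rfl, rfl⟩, rfl, rfl⟩ := hpq
      obtain ⟨⟨⟨_, heq1, heq2, heq3⟩, had, heh, hb⟩, hbb0, hcc0, hff0⟩ := hp
      obtain ⟨⟨⟨_, heq1', heq2', heq3'⟩, had', heh', hb'⟩, hbb0', hcc0', hff0'⟩ := hq'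
      have hbb : b = b' := by rw [hbb0, hbb0']
      have hcc : c = c' := by rw [hcc0, hcc0']
      have hff : f = f' := by rw [hff0, hff0']
      subst hbb; subst hcc; subst hff
      have hgg : g = g' := by
        apply mul_left_cancel₀ hb
        rw [heq1, heq1']
      subst hgg; rfl


lemma total_bound (A : Finset ℝ) :
    (SS A).card ≤ 3*A.card^5 + 3*A.card^4 + Eset A * A.card^2 + Eset A * A.card^3 := by
  classical
  have hcov : SS A ⊆
      ((SS A).filter (fun p => p.1.1 = p.1.2.2.2 ∧ p.2.1 = p.2.2.2.2)) ∪
      ((SS A).filter (fun p => p.1.1 = p.1.2.2.2 ∧ p.2.1 ≠ p.2.2.2.2)) ∪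
      ((SS A).filter (fun p => p.1.1 ≠ p.1.2.2.2 ∧ p.2.1 = p.2.2.2.2)) ∪
      ((SS A).filter (fun p => p.1.1 ≠ p.1.2.2.2 ∧ p.2.1 ≠ p.2.2.2.2 ∧
        p.1.2.1 = 0 ∧ p.1.2.2.1 = 0)) ∪
      ((SS A).filter (fun p => p.1.1 ≠ p.1.2.2.2 ∧ p.2.1 ≠ p.2.2.2.2 ∧
        p.1.2.1 = 0 ∧ p.1.2.2.1 ≠ 0)) ∪
      ((SS A).filter (fun p => p.1.1 ≠ p.1.2.2.2 ∧ p.2.1 ≠ p.2.2.2.2 ∧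
        p.1.2.1 ≠ 0)) := by
    intro p hp
    simp only [Finset.mem_union, Finset.mem_filter, hp, true_and]
    tauto
  refine le_trans (Finset.card_le_card hcov) ?_
  refine le_trans (Finset.card_union_le _ _) ?_
  refine le_trans (Nat.add_le_add_right (Finset.card_union_le _ _) _) ?_
  refine le_trans (Nat.add_le_add_right (Nat.add_le_add_right (Finset.card_union_le _ _) _) _) ?_
  refine le_trans (Nat.add_le_add_right (Nat.add_le_add_right
    (Nat.add_le_add_right (Finset.card_union_le _ _) _) _) _) ?_
  refine le_trans (Nat.add_le_add_right (Nat.add_le_add_right (Nat.add_le_add_right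
    (Nat.add_le_add_right (Finset.card_union_le _ _) _) _) _) _) ?_
  have h1 := bound1 A
  have h2 := bound2 A
  have h3 := bound3 A
  have h4 := bound4 A
  have h5 := bound5 A
  have h6 := bound6 A
  omega

/-- There is an absolute constant `C > 0` such that every finite
nonempty set `A ⊆ ℝ` satisfies `T(A) ≤ C·(|A|⁵ + |A|³·E(A))`. -/
theorem stmt17 : ∃ C : ℝ, 0 < C ∧ ∀ A : Finset ℝ, A.Nonempty →
    (Tset A : ℝ) ≤ C * ((A.card : ℝ) ^ 5 + (A.card : ℝ) ^ 3 * (Eset A : ℝ)) := by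
  refine ⟨10, by norm_num, fun A hA => ?_⟩
  have hn1 : 1 ≤ A.card := Finset.card_pos.mpr hA
  have hbound : Tset A ≤ 3*A.card^5 + 3*A.card^4 + Eset A * A.card^2 + Eset A * A.card^3 := by
    rw [Tset_eq]; exact total_bound A
  have hR : (Tset A : ℝ) ≤ 3*(A.card:ℝ)^5 + 3*(A.card:ℝ)^4
      + (Eset A : ℝ) * (A.card:ℝ)^2 + (Eset A : ℝ) * (A.card:ℝ)^3 := by
    exact_mod_cast hbound
  have hn1R : (1:ℝ) ≤ (A.card : ℝ) := by exact_mod_cast hn1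
  have hE0 : (0:ℝ) ≤ (Eset A : ℝ) := Nat.cast_nonneg _
  have h45 : (A.card:ℝ)^4 ≤ (A.card:ℝ)^5 :=
    pow_le_pow_right₀ (by linarith) (by norm_num)
  have h23 : (A.card:ℝ)^2 ≤ (A.card:ℝ)^3 :=
    pow_le_pow_right₀ (by linarith) (by norm_num)
  have hE23 : (Eset A : ℝ) * (A.card:ℝ)^2 ≤ (Eset A : ℝ) * (A.card:ℝ)^3 :=
    mul_le_mul_of_nonneg_left h23 hE0
  nlinarith [hR, h45, hE23, hE0, pow_nonneg (le_trans zero_le_one hn1R) 5,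
    pow_nonneg (le_trans zero_le_one hn1R) 3]
end

section
/- There is an absolute constant C > 0 such that for every finite nonempty set A ⊆ ℝ one has |T(A) − E(𝔊)| ≤ C·|A|^5, where, writing g_{a,b} : ℝ → ℝ for the map x ↦ a·x + b (a bijection of ℝ when a ≠ 0), E(𝔊) denotes the number of quadruples ((a1,b1),(a2,b2),(a3,b3),(a4,b4)) ∈ ((A\{0}) × A)^4 such that g_{a1,b1}^{-1} ∘ g_{a2,b2} = g_{a3,b3}^{-1} ∘ g_{a4,b4} as functions from ℝ to ℝ. -/
open Finset
open scoped Classical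

/-- `E(𝔊)`: the number of quadruples `((a1,b1),(a2,b2),(a3,b3),(a4,b4))` in
`((A\{0}) × A)⁴` with `g_{a1,b1}⁻¹ ∘ g_{a2,b2} = g_{a3,b3}⁻¹ ∘ g_{a4,b4}` as functions
`ℝ → ℝ`, where `g_{a,b}(x) = a·x + b` and `g_{a,b}⁻¹(x) = (x − b)/a`. -/
noncomputable def Eaff (A : Finset ℝ) : ℕ :=
  (((((A.erase 0) ×ˢ A) ×ˢ ((A.erase 0) ×ˢ A)) ×ˢ
      (((A.erase 0) ×ˢ A) ×ˢ ((A.erase 0) ×ˢ A))).filter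
    (fun p => (fun x : ℝ => (p.1.2.1 * x + p.1.2.2 - p.1.1.2) / p.1.1.1)
            = (fun x : ℝ => (p.2.2.1 * x + p.2.2.2 - p.2.1.2) / p.2.1.1))).card

/- Auxiliary development. A tuple `x = ((p,q,r,s),(t,u,v,w))` encodes the pair of
matrices `!![p,q;r,s]`, `!![t,u;v,w]`. -/

lemma comm_iff (p q r s t u v w : ℝ) :
    !![p, q; r, s] * !![t, u; v, w] = !![t, u; v, w] * !![p, q; r, s] ↔
      (q * v = r * u ∧ u * (p - s) = q * (t - w) ∧ v * (p - s) = r * (t - w)) := by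
  constructor
  · intro h
    rw [← Matrix.ext_iff] at h
    have h00 := h 0 0
    have h01 := h 0 1
    have h10 := h 1 0
    simp [Matrix.mul_apply, Fin.sum_univ_two] at h00 h01 h10
    exact ⟨by linear_combination h00, by linear_combination h01, by linear_combination -h10⟩
  · rintro ⟨h1, h2, h3⟩
    ext i j
    fin_cases i <;> fin_cases j <;>
      simp [Matrix.mul_apply, Fin.sum_univ_two] <;>
      first
        | linear_combination h1 | linear_combination -h1
        | linear_combination h2 | linear_combination -h2
        | linear_combination h3 | linear_combination -h3

/-- The set of commuting pairs, with commutation written as polynomial equations. -/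
noncomputable def Scomm (A : Finset ℝ) : Finset ((ℝ×ℝ×ℝ×ℝ)×(ℝ×ℝ×ℝ×ℝ)) :=
  ((A ×ˢ A ×ˢ A ×ˢ A) ×ˢ (A ×ˢ A ×ˢ A ×ˢ A)).filter
    (fun x => x.1.2.1 * x.2.2.2.1 = x.1.2.2.1 * x.2.2.1 ∧
      x.2.2.1 * (x.1.1 - x.1.2.2.2) = x.1.2.1 * (x.2.1 - x.2.2.2.2) ∧
      x.2.2.2.1 * (x.1.1 - x.1.2.2.2) = x.1.2.2.1 * (x.2.1 - x.2.2.2.2))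

lemma Tset_eq_card_Scomm (A : Finset ℝ) : Tset A = (Scomm A).card := by
  unfold Tset Scomm
  congr 1
  apply Finset.filter_congr
  intro x _
  exact comm_iff x.1.1 x.1.2.1 x.1.2.2.1 x.1.2.2.2 x.2.1 x.2.2.1 x.2.2.2.1 x.2.2.2.2

/-- The "good" (nondegenerate) condition: `q, r, u, v` all nonzero. -/
def goodP (x : (ℝ×ℝ×ℝ×ℝ)×(ℝ×ℝ×ℝ×ℝ)) : Prop :=
  x.1.2.1 ≠ 0 ∧ x.1.2.2.1 ≠ 0 ∧ x.2.2.1 ≠ 0 ∧ x.2.2.2.1 ≠ 0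

lemma mem_Scomm {A : Finset ℝ} {x : (ℝ×ℝ×ℝ×ℝ)×(ℝ×ℝ×ℝ×ℝ)} :
    x ∈ Scomm A ↔ (x.1.1 ∈ A ∧ x.1.2.1 ∈ A ∧ x.1.2.2.1 ∈ A ∧ x.1.2.2.2 ∈ A ∧
      x.2.1 ∈ A ∧ x.2.2.1 ∈ A ∧ x.2.2.2.1 ∈ A ∧ x.2.2.2.2 ∈ A) ∧
      (x.1.2.1 * x.2.2.2.1 = x.1.2.2.1 * x.2.2.1 ∧
      x.2.2.1 * (x.1.1 - x.1.2.2.2) = x.1.2.1 * (x.2.1 - x.2.2.2.2) ∧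
      x.2.2.2.1 * (x.1.1 - x.1.2.2.2) = x.1.2.2.1 * (x.2.1 - x.2.2.2.2)) := by
  simp [Scomm, Finset.mem_product, and_assoc]

/-- The number of affine-energy quadruples equals the number of good commuting pairs. -/
lemma Eaff_eq_good (A : Finset ℝ) :
    Eaff A = ((Scomm A).filter goodP).card := by
  unfold Eaff
  apply Finset.card_nbij'
    (i := fun e => ((e.1.2.2, e.1.2.1, e.1.1.1, e.1.1.2), (e.2.2.2, e.2.2.1, e.2.1.1, e.2.1.2)))
    (j := fun x => (((x.1.2.2.1, x.1.2.2.2), (x.1.2.1, x.1.1)),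
      ((x.2.2.2.1, x.2.2.2.2), (x.2.2.1, x.2.1))))
  · intro e he
    obtain ⟨⟨⟨a1, b1⟩, ⟨a2, b2⟩⟩, ⟨⟨a3, b3⟩, ⟨a4, b4⟩⟩⟩ := e
    simp only [Finset.mem_coe, Finset.mem_filter, Finset.mem_product, Finset.mem_erase] at he
    obtain ⟨⟨⟨⟨⟨ha1, ha1A⟩, hb1⟩, ⟨ha2, ha2A⟩, hb2⟩, ⟨⟨ha3, ha3A⟩, hb3⟩, ⟨ha4, ha4A⟩, hb4⟩, hf⟩ := he
    have h0 := congrFun hf 0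
    have h1 := congrFun hf 1
    simp only [mul_zero, mul_one, zero_add] at h0 h1
    rw [div_eq_div_iff ha1 ha3] at h0 h1
    have e2 : a2 * a3 = a1 * a4 := by linear_combination h1 - h0
    refine Finset.mem_filter.2 ⟨mem_Scomm.2 ⟨⟨hb2, ha2A, ha1A, hb1, hb4, ha4A, ha3A, hb3⟩,
      ?_, ?_, ?_⟩, ha2, ha1, ha4, ha3⟩
    · exact e2
    · apply mul_left_cancel₀ ha3
      linear_combination a4 * h0 - (b4 - b3) * e2
    · linear_combination h0
  · intro x hx
    obtain ⟨⟨p, q, r, s⟩, ⟨t, u, v, w⟩⟩ := x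
    rw [Finset.mem_coe, Finset.mem_filter] at hx
    obtain ⟨hm, hq, hr, hu, hv⟩ := hx
    obtain ⟨⟨hpA, hqA, hrA, hsA, htA, huA, hvA, hwA⟩, e1, e2, e3⟩ := mem_Scomm.1 hm
    simp only [Finset.mem_coe, Finset.mem_filter, Finset.mem_product, Finset.mem_erase]
    refine ⟨⟨⟨⟨⟨hr, hrA⟩, hsA⟩, ⟨hq, hqA⟩, hpA⟩, ⟨⟨hv, hvA⟩, hwA⟩, ⟨hu, huA⟩, htA⟩, ?_⟩
    funext x0
    rw [div_eq_div_iff hr hv]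
    dsimp only at e1 e2 e3 ⊢
    linear_combination x0 * e1 + e3
  · intro e he
    obtain ⟨⟨⟨a1, b1⟩, ⟨a2, b2⟩⟩, ⟨⟨a3, b3⟩, ⟨a4, b4⟩⟩⟩ := e
    rfl
  · intro x hx
    obtain ⟨⟨p, q, r, s⟩, ⟨t, u, v, w⟩⟩ := x
    rfl

/-- The standard 5-fold product, of cardinality `|A|^5`. -/
noncomputable def A5 (A : Finset ℝ) : Finset (ℝ×ℝ×ℝ×ℝ×ℝ) := A ×ˢ A ×ˢ A ×ˢ A ×ˢ A

lemma card_A5 (A : Finset ℝ) : (A5 A).card = A.card ^ 5 := by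
  simp [A5, Finset.card_product]; ring

lemma boundify {A : Finset ℝ} (B : Finset ((ℝ×ℝ×ℝ×ℝ)×(ℝ×ℝ×ℝ×ℝ)))
    (f : (ℝ×ℝ×ℝ×ℝ)×(ℝ×ℝ×ℝ×ℝ) → ℝ×ℝ×ℝ×ℝ×ℝ)
    (hf : ∀ a ∈ B, f a ∈ A5 A) (hinj : Set.InjOn f B) : B.card ≤ A.card ^ 5 := by
  rw [← card_A5 A]
  exact Finset.card_le_card_of_injOn f hf hinj

lemma cardB1 (A : Finset ℝ) :
    ((Scomm A).filter (fun x => x.1.2.1 = 0 ∧ x.1.2.2.1 = 0 ∧ x.1.1 = x.1.2.2.2)).card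
      ≤ A.card ^ 5 := by
  apply boundify _ (fun x => (x.1.1, x.2.1, x.2.2.1, x.2.2.2.1, x.2.2.2.2))
  · intro x hx
    rw [Finset.mem_filter] at hx
    obtain ⟨⟨hpA, _, _, _, htA, huA, hvA, hwA⟩, _⟩ := mem_Scomm.1 hx.1
    simp [A5, Finset.mem_product, *]
  · intro x hx y hy hxy
    obtain ⟨⟨p, q, r, s⟩, t, u, v, w⟩ := x
    obtain ⟨⟨p', q', r', s'⟩, t', u', v', w'⟩ := y
    simp only [Finset.coe_filter, Set.mem_setOf_eq] at hx hy
    obtain ⟨_, hq1, hr1, hs1⟩ := hx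
    obtain ⟨_, hq2, hr2, hs2⟩ := hy
    simp only [Prod.mk.injEq] at hxy ⊢
    obtain ⟨hp, ht, hu, hv, hw⟩ := hxy
    exact ⟨⟨hp, hq1.trans hq2.symm, hr1.trans hr2.symm, by rw [← hs1, ← hs2, hp]⟩,
      ht, hu, hv, hw⟩

lemma cardB2 (A : Finset ℝ) :
    ((Scomm A).filter (fun x => x.1.2.1 = 0 ∧ x.1.2.2.1 = 0 ∧ x.1.1 ≠ x.1.2.2.2)).card
      ≤ A.card ^ 5 := by
  apply boundify _ (fun x => (x.1.1, x.1.2.2.2, x.2.1, x.2.2.2.2, x.1.1))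
  · intro x hx
    rw [Finset.mem_filter] at hx
    obtain ⟨⟨hpA, _, _, hsA, htA, _, _, hwA⟩, _⟩ := mem_Scomm.1 hx.1
    simp [A5, Finset.mem_product, *]
  · intro x hx y hy hxy
    obtain ⟨⟨p, q, r, s⟩, t, u, v, w⟩ := x
    obtain ⟨⟨p', q', r', s'⟩, t', u', v', w'⟩ := y
    simp only [Finset.coe_filter, Set.mem_setOf_eq] at hx hy
    obtain ⟨hxS, hq1, hr1, hps1⟩ := hx
    obtain ⟨hyS, hq2, hr2, hps2⟩ := hy
    obtain ⟨_, _, ex2, ex3⟩ := mem_Scomm.1 hxS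
    obtain ⟨_, _, ey2, ey3⟩ := mem_Scomm.1 hyS
    dsimp only at ex2 ex3 ey2 ey3
    have hpsx : p - s ≠ 0 := sub_ne_zero.2 hps1
    have hpsy : p' - s' ≠ 0 := sub_ne_zero.2 hps2
    have hux : u = 0 := by
      have : u * (p - s) = 0 := by rw [ex2, hq1, zero_mul]
      exact (mul_eq_zero.1 this).resolve_right hpsx
    have hvx : v = 0 := by
      have : v * (p - s) = 0 := by rw [ex3, hr1, zero_mul]
      exact (mul_eq_zero.1 this).resolve_right hpsx
    have huy : u' = 0 := by
      have : u' * (p' - s') = 0 := by rw [ey2, hq2, zero_mul]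
      exact (mul_eq_zero.1 this).resolve_right hpsy
    have hvy : v' = 0 := by
      have : v' * (p' - s') = 0 := by rw [ey3, hr2, zero_mul]
      exact (mul_eq_zero.1 this).resolve_right hpsy
    simp only [Prod.mk.injEq] at hxy ⊢
    obtain ⟨hp, hs, ht, hw, -⟩ := hxy
    exact ⟨⟨hp, hq1.trans hq2.symm, hr1.trans hr2.symm, hs⟩,
      ht, hux.trans huy.symm, hvx.trans hvy.symm, hw⟩

lemma cardB3 (A : Finset ℝ) :
    ((Scomm A).filter (fun x => x.1.2.1 = 0 ∧ x.1.2.2.1 ≠ 0)).card ≤ A.card ^ 5 := by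
  apply boundify _ (fun x => (x.1.1, x.1.2.2.1, x.1.2.2.2, x.2.1, x.2.2.2.1))
  · intro x hx
    rw [Finset.mem_filter] at hx
    obtain ⟨⟨hpA, _, hrA, hsA, htA, _, hvA, _⟩, _⟩ := mem_Scomm.1 hx.1
    simp [A5, Finset.mem_product, *]
  · intro x hx y hy hxy
    obtain ⟨⟨p, q, r, s⟩, t, u, v, w⟩ := x
    obtain ⟨⟨p', q', r', s'⟩, t', u', v', w'⟩ := y
    simp only [Finset.coe_filter, Set.mem_setOf_eq] at hx hy
    obtain ⟨hxS, hq1, hr1⟩ := hx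
    obtain ⟨hyS, hq2, hr2⟩ := hy
    obtain ⟨_, ex1, _, ex3⟩ := mem_Scomm.1 hxS
    obtain ⟨_, ey1, _, ey3⟩ := mem_Scomm.1 hyS
    dsimp only at ex1 ex3 ey1 ey3
    have hux : u = 0 := by
      have : r * u = 0 := by rw [← ex1, hq1, zero_mul]
      exact (mul_eq_zero.1 this).resolve_left hr1
    have huy : u' = 0 := by
      have : r' * u' = 0 := by rw [← ey1, hq2, zero_mul]
      exact (mul_eq_zero.1 this).resolve_left hr2
    simp only [Prod.mk.injEq] at hxy ⊢
    obtain ⟨hp, hr, hs, ht, hv⟩ := hxy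
    have hw : w = w' := by
      have h1 : r * (t - w) = r * (t - w') := by
        rw [← ex3, hp, hs, hv, ey3, hr, ht]
      have := mul_left_cancel₀ hr1 h1
      linarith
    exact ⟨⟨hp, hq1.trans hq2.symm, hr, hs⟩, ht, hux.trans huy.symm, hv, hw⟩

lemma cardB4 (A : Finset ℝ) :
    ((Scomm A).filter (fun x => x.1.2.1 ≠ 0 ∧ x.1.2.2.1 = 0)).card ≤ A.card ^ 5 := by
  apply boundify _ (fun x => (x.1.1, x.1.2.1, x.1.2.2.2, x.2.1, x.2.2.1))
  · intro x hx
    rw [Finset.mem_filter] at hx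
    obtain ⟨⟨hpA, hqA, _, hsA, htA, huA, _, _⟩, _⟩ := mem_Scomm.1 hx.1
    simp [A5, Finset.mem_product, *]
  · intro x hx y hy hxy
    obtain ⟨⟨p, q, r, s⟩, t, u, v, w⟩ := x
    obtain ⟨⟨p', q', r', s'⟩, t', u', v', w'⟩ := y
    simp only [Finset.coe_filter, Set.mem_setOf_eq] at hx hy
    obtain ⟨hxS, hq1, hr1⟩ := hx
    obtain ⟨hyS, hq2, hr2⟩ := hy
    obtain ⟨_, ex1, ex2, _⟩ := mem_Scomm.1 hxS
    obtain ⟨_, ey1, ey2, _⟩ := mem_Scomm.1 hyS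
    dsimp only at ex1 ex2 ey1 ey2
    have hvx : v = 0 := by
      have : q * v = 0 := by rw [ex1, hr1, zero_mul]
      exact (mul_eq_zero.1 this).resolve_left hq1
    have hvy : v' = 0 := by
      have : q' * v' = 0 := by rw [ey1, hr2, zero_mul]
      exact (mul_eq_zero.1 this).resolve_left hq2
    simp only [Prod.mk.injEq] at hxy ⊢
    obtain ⟨hp, hq, hs, ht, hu⟩ := hxy
    have hw : w = w' := by
      have h1 : q * (t - w) = q * (t - w') := by
        rw [← ex2, hp, hs, hu, ey2, hq, ht]
      have := mul_left_cancel₀ hq1 h1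
      linarith
    exact ⟨⟨hp, hq, hr1.trans hr2.symm, hs⟩, ht, hu, hvx.trans hvy.symm, hw⟩

lemma cardB5 (A : Finset ℝ) :
    ((Scomm A).filter (fun x => x.1.2.1 ≠ 0 ∧ x.1.2.2.1 ≠ 0 ∧
      (x.2.2.1 = 0 ∨ x.2.2.2.1 = 0))).card ≤ A.card ^ 5 := by
  apply boundify _ (fun x => (x.1.1, x.1.2.1, x.1.2.2.1, x.1.2.2.2, x.2.1))
  · intro x hx
    rw [Finset.mem_filter] at hx
    obtain ⟨⟨hpA, hqA, hrA, hsA, htA, _, _, _⟩, _⟩ := mem_Scomm.1 hx.1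
    simp [A5, Finset.mem_product, *]
  · intro x hx y hy hxy
    obtain ⟨⟨p, q, r, s⟩, t, u, v, w⟩ := x
    obtain ⟨⟨p', q', r', s'⟩, t', u', v', w'⟩ := y
    simp only [Finset.coe_filter, Set.mem_setOf_eq] at hx hy
    obtain ⟨hxS, hq1, hr1, huv1⟩ := hx
    obtain ⟨hyS, hq2, hr2, huv2⟩ := hy
    obtain ⟨_, ex1, ex2, _⟩ := mem_Scomm.1 hxS
    obtain ⟨_, ey1, ey2, _⟩ := mem_Scomm.1 hyS
    dsimp only at ex1 ex2 ey1 ey2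
    have huvx : u = 0 ∧ v = 0 := by
      rcases huv1 with h | h
      · exact ⟨h, by
          have : q * v = 0 := by rw [ex1, h, mul_zero]
          exact (mul_eq_zero.1 this).resolve_left hq1⟩
      · exact ⟨by
          have : r * u = 0 := by rw [← ex1, h, mul_zero]
          exact (mul_eq_zero.1 this).resolve_left hr1, h⟩
    have huvy : u' = 0 ∧ v' = 0 := by
      rcases huv2 with h | h
      · exact ⟨h, by
          have : q' * v' = 0 := by rw [ey1, h, mul_zero]
          exact (mul_eq_zero.1 this).resolve_left hq2⟩
      · exact ⟨by
          have : r' * u' = 0 := by rw [← ey1, h, mul_zero]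
          exact (mul_eq_zero.1 this).resolve_left hr2, h⟩
    have hwx : w = t := by
      have : q * (t - w) = 0 := by rw [← ex2, huvx.1, zero_mul]
      have := (mul_eq_zero.1 this).resolve_left hq1
      linarith [sub_eq_zero.1 this]
    have hwy : w' = t' := by
      have : q' * (t' - w') = 0 := by rw [← ey2, huvy.1, zero_mul]
      have := (mul_eq_zero.1 this).resolve_left hq2
      linarith [sub_eq_zero.1 this]
    simp only [Prod.mk.injEq] at hxy ⊢
    obtain ⟨hp, hq, hr, hs, ht⟩ := hxy
    exact ⟨⟨hp, hq, hr, hs⟩, ht, huvx.1.trans huvy.1.symm, huvx.2.trans huvy.2.symm,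
      by rw [hwx, hwy, ht]⟩

/-- There is an absolute constant `C > 0` such that every finite
nonempty `A ⊆ ℝ` satisfies `|T(A) − E(𝔊)| ≤ C·|A|⁵`. -/
theorem stmt19 : ∃ C : ℝ, 0 < C ∧ ∀ A : Finset ℝ, A.Nonempty →
    |(Tset A : ℝ) - (Eaff A : ℝ)| ≤ C * (A.card : ℝ) ^ 5 := by
  refine ⟨5, by norm_num, ?_⟩
  intro A _
  classical
  set D := (Scomm A).filter (fun x => ¬ goodP x) with hDdef
  have hsplit : ((Scomm A).filter goodP).card + D.card = (Scomm A).card :=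
    Finset.card_filter_add_card_filter_not _
  have hTE : Tset A = Eaff A + D.card := by
    rw [Tset_eq_card_Scomm, Eaff_eq_good, ← hsplit]
  set B1 := (Scomm A).filter (fun x => x.1.2.1 = 0 ∧ x.1.2.2.1 = 0 ∧ x.1.1 = x.1.2.2.2) with hB1
  set B2 := (Scomm A).filter (fun x => x.1.2.1 = 0 ∧ x.1.2.2.1 = 0 ∧ x.1.1 ≠ x.1.2.2.2) with hB2
  set B3 := (Scomm A).filter (fun x => x.1.2.1 = 0 ∧ x.1.2.2.1 ≠ 0) with hB3
  set B4 := (Scomm A).filter (fun x => x.1.2.1 ≠ 0 ∧ x.1.2.2.1 = 0) with hB4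
  set B5 := (Scomm A).filter
    (fun x => x.1.2.1 ≠ 0 ∧ x.1.2.2.1 ≠ 0 ∧ (x.2.2.1 = 0 ∨ x.2.2.2.1 = 0)) with hB5
  have hcover : D ⊆ B1 ∪ B2 ∪ B3 ∪ B4 ∪ B5 := by
    intro x hx
    rw [hDdef, Finset.mem_filter] at hx
    obtain ⟨hS, hbad⟩ := hx
    simp only [goodP, not_and_or, not_not] at hbad
    simp only [Finset.mem_union, hB1, hB2, hB3, hB4, hB5, Finset.mem_filter]
    by_cases hq : x.1.2.1 = 0
    · by_cases hr : x.1.2.2.1 = 0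
      · by_cases hps : x.1.1 = x.1.2.2.2
        · exact Or.inl (Or.inl (Or.inl (Or.inl ⟨hS, hq, hr, hps⟩)))
        · exact Or.inl (Or.inl (Or.inl (Or.inr ⟨hS, hq, hr, hps⟩)))
      · exact Or.inl (Or.inl (Or.inr ⟨hS, hq, hr⟩))
    · by_cases hr : x.1.2.2.1 = 0
      · exact Or.inl (Or.inr ⟨hS, hq, hr⟩)
      · refine Or.inr ⟨hS, hq, hr, ?_⟩
        rcases hbad with h | h | h | h
        · exact absurd h hq
        · exact absurd h hr
        · exact Or.inl h
        · exact Or.inr h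
  have hDcard : D.card ≤ 5 * A.card ^ 5 := by
    have hc := Finset.card_le_card hcover
    have h4 := Finset.card_union_le (B1 ∪ B2 ∪ B3 ∪ B4) B5
    have h3 := Finset.card_union_le (B1 ∪ B2 ∪ B3) B4
    have h2 := Finset.card_union_le (B1 ∪ B2) B3
    have h1 := Finset.card_union_le B1 B2
    have c1 := cardB1 A
    have c2 := cardB2 A
    have c3 := cardB3 A
    have c4 := cardB4 A
    have c5 := cardB5 A
    rw [← hB1] at c1
    rw [← hB2] at c2
    rw [← hB3] at c3
    rw [← hB4] at c4
    rw [← hB5] at c5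
    omega
  have : |(Tset A : ℝ) - (Eaff A : ℝ)| = (D.card : ℝ) := by
    rw [hTE]
    push_cast
    rw [add_sub_cancel_left, abs_of_nonneg (by positivity)]
  rw [this]
  calc (D.card : ℝ) ≤ ((5 * A.card ^ 5 : ℕ) : ℝ) := by exact_mod_cast hDcard
    _ = 5 * (A.card : ℝ) ^ 5 := by push_cast; ring
end
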